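/- arXiv:1402.2007 — 7 statements merged into one kernel-verified Lean document; each statement's English description precedes it below -/
import Mathlib

section
/- Let B be a Poisson Hopf algebra and suppose R = B[x; α, δ]_p is a Poisson Ore extension that is a Poisson Hopf algebra containing B as a Poisson Hopf subalgebra, with ε(x) = 0 and Δ(x) = g⊗x + x⊗1 + w for some group-like g ∈ B and w ∈ B⁺⊗B⁺. Then the map η: B → k defined by η(b) = ε(α(b)) satisfies α(b) = η(b₁)b₂ for all b ∈ B, and η is a derivation into the trivial module: η(ab) = ε(a)η(b) + ε(b)η(a). -/
open TensorProduct Coalgebra Polynomial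


/-- The `n`-th coefficient of a polynomial, as a `k`-linear map. -/
def coeffL (k : Type*) {B : Type*} [CommSemiring k] [CommRing B] [Module k B] (n : ℕ) :
    Polynomial B →ₗ[k] B where
  toFun p := p.coeff n
  map_add' p q := Polynomial.coeff_add p q n
  map_smul' c p := Polynomial.coeff_smul c p n

@[simp] lemma coeffL_apply (k : Type*) {B : Type*} [CommSemiring k] [CommRing B] [Module k B]
    (n : ℕ) (p : Polynomial B) : coeffL k n p = p.coeff n := rfl

set_option maxHeartbeats 1000000 in
/-- If a Poisson Ore extension `R = B[x; α, δ]_p` of a Poisson Hopf algebra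
`B` is a Poisson Hopf algebra containing `B` as a Poisson Hopf subalgebra, with `ε(x) = 0` and
`Δ(x) = g⊗x + x⊗1 + w` for a group-like `g` and `w ∈ B⁺⊗B⁺`, then `η := ε ∘ α` satisfies
`α(b) = η(b₁)b₂` and `η(ab) = ε(a)η(b) + ε(b)η(a)`. -/
theorem poisson_hopf_ore_eta (k B : Type*) [Field k] [CommRing B] [HopfAlgebra k B]
    -- the Poisson structure on `B`
    (BrB : B →ₗ[k] B →ₗ[k] B)
    (skewB : ∀ a b, BrB a b = - BrB b a)
    (jacobiB : ∀ a b c, BrB a (BrB b c) = BrB (BrB a b) c + BrB b (BrB a c))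
    (leibnizB : ∀ a b c, BrB a (b * c) = BrB a b * c + b * BrB a c)
    (BrTB : (B ⊗[k] B) →ₗ[k] (B ⊗[k] B) →ₗ[k] (B ⊗[k] B))
    (hBrTB : ∀ a b c d : B,
      BrTB (a ⊗ₜ[k] b) (c ⊗ₜ[k] d) = (a * c) ⊗ₜ[k] (BrB b d) + (BrB a c) ⊗ₜ[k] (d * b))
    (compatB : ∀ a b : B, comul (R := k) (BrB a b) = BrTB (comul a) (comul b))
    -- `α` is a Poisson derivation and `δ` a derivation satisfying the `α`-twisted condition
    (α δ' : B →ₗ[k] B)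
    (hαmul : ∀ a b, α (a * b) = α a * b + a * α b)
    (hαbr : ∀ a b, α (BrB a b) = BrB (α a) b + BrB a (α b))
    (hδmul : ∀ a b, δ' (a * b) = δ' a * b + a * δ' b)
    (hδbr : ∀ a b, δ' (BrB a b) = BrB (δ' a) b + BrB a (δ' b) + α a * δ' b - δ' a * α b)
    -- the Poisson bracket of the Poisson Ore extension `R = B[x; α, δ]_p`
    (BrR : Polynomial B →ₗ[k] Polynomial B →ₗ[k] Polynomial B)
    (skewR : ∀ u v, BrR u v = - BrR v u)
    (jacobiR : ∀ u v w, BrR u (BrR v w) = BrR (BrR u v) w + BrR v (BrR u w))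
    (leibnizR : ∀ u v w, BrR u (v * w) = BrR u v * w + v * BrR u w)
    (hBrRC : ∀ a b : B, BrR (C a) (C b) = C (BrB a b))
    (hBrRX : ∀ b : B, BrR X (C b) = C (α b) * X + C (δ' b))
    -- `C : B → R` as a `k`-linear map
    (CL : B →ₗ[k] Polynomial B) (hCL : ∀ b, CL b = C b)
    -- the Hopf (bialgebra) structure of `R`, with `B` a Hopf subalgebra
    (ΔR : Polynomial B →ₐ[k] Polynomial B ⊗[k] Polynomial B)
    (εR : Polynomial B →ₐ[k] k)
    (hcounit₁ : ∀ u, (TensorProduct.lid k (Polynomial B))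
      (TensorProduct.map εR.toLinearMap LinearMap.id (ΔR u)) = u)
    (hcounit₂ : ∀ u, (TensorProduct.rid k (Polynomial B))
      (TensorProduct.map LinearMap.id εR.toLinearMap (ΔR u)) = u)
    (hΔC : ∀ b : B, ΔR (C b) = TensorProduct.map CL CL (comul (R := k) b))
    (hεC : ∀ b : B, εR (C b) = counit (R := k) b)
    -- `R` is a Poisson Hopf algebra
    (BrTR : (Polynomial B ⊗[k] Polynomial B) →ₗ[k] (Polynomial B ⊗[k] Polynomial B) →ₗ[k]
      (Polynomial B ⊗[k] Polynomial B))
    (hBrTR : ∀ a b c d : Polynomial B,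
      BrTR (a ⊗ₜ[k] b) (c ⊗ₜ[k] d) = (a * c) ⊗ₜ[k] (BrR b d) + (BrR a c) ⊗ₜ[k] (d * b))
    (compatR : ∀ u v : Polynomial B, ΔR (BrR u v) = BrTR (ΔR u) (ΔR v))
    -- `ε(x) = 0` and `Δ(x) = g⊗x + x⊗1 + w` with `g` group-like and `w ∈ B⁺⊗B⁺`
    (hεX : εR X = 0)
    (g : B) (hg : comul (R := k) g = g ⊗ₜ[k] g) (hεg : counit (R := k) g = (1 : k))
    (w : B ⊗[k] B)
    (hw : w ∈ LinearMap.range (TensorProduct.mapIncl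
      (LinearMap.ker (counit (R := k) (A := B))) (LinearMap.ker (counit (R := k) (A := B)))))
    (hΔX : ΔR X = (C g) ⊗ₜ[k] X + X ⊗ₜ[k] 1 + TensorProduct.map CL CL w) :
    -- conclusion: `η := ε ∘ α` recovers `α` via `α(b) = η(b₁)b₂`, and `η` is a derivation
    (∀ b : B, α b = (TensorProduct.lid k B)
      (TensorProduct.map (counit (R := k) ∘ₗ α) LinearMap.id (comul (R := k) b))) ∧
    (∀ a b : B, (counit (R := k) ∘ₗ α) (a * b) =
      counit (R := k) a * (counit (R := k) ∘ₗ α) b +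
      counit (R := k) b * (counit (R := k) ∘ₗ α) a) := by

  classical
  -- `ε_B` as a linear map
  set εB : B →ₗ[k] k := counit (R := k) with hεB
  -- the bracket with `1` vanishes
  have hBrone : ∀ v : Polynomial B, BrR v 1 = 0 := by
    intro v
    have h := leibnizR v 1 1
    simp only [mul_one, one_mul] at h
    exact (right_eq_add.mp h)
  have hBr1 : ∀ v : Polynomial B, BrR 1 v = 0 := by
    intro v; rw [skewR, hBrone, neg_zero]
  -- the key functional `Φ (p ⊗ q) = ε (coeff 1 p) • coeff 0 q`
  set Φ : Polynomial B ⊗[k] Polynomial B →ₗ[k] B :=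
    (TensorProduct.lid k B).toLinearMap ∘ₗ
      TensorProduct.map (εB ∘ₗ coeffL k 1) (coeffL k 0) with hΦdef
  have hΦ : ∀ p q : Polynomial B, Φ (p ⊗ₜ[k] q) = εB (p.coeff 1) • q.coeff 0 := by
    intro p q
    rw [hΦdef]
    simp only [LinearMap.coe_comp, LinearEquiv.coe_coe, Function.comp_apply,
      TensorProduct.map_tmul, LinearMap.comp_apply, coeffL_apply, TensorProduct.lid_tmul]
  -- counit axiom in the form we use it
  have hcount : ∀ a : B, (TensorProduct.lid k B)
      (TensorProduct.map εB LinearMap.id (comul (R := k) a)) = a := by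
    intro a
    have h : TensorProduct.map εB LinearMap.id (comul (R := k) a)
        = LinearMap.rTensor B εB (comul (R := k) a) := rfl
    rw [h, hεB, Coalgebra.rTensor_counit_comul, TensorProduct.lid_tmul, one_smul]
  -- Φ on the various pieces of the left-hand side
  have h1 : ∀ t : B ⊗[k] B,
      Φ ((TensorProduct.map CL CL t) * ((C g) ⊗ₜ[k] (X : Polynomial B))) = 0 := by
    intro t
    induction t using TensorProduct.induction_on with
    | zero => simp
    | tmul u v =>
        rw [TensorProduct.map_tmul, hCL u, hCL v, Algebra.TensorProduct.tmul_mul_tmul,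
          hΦ, ← Polynomial.C_mul, Polynomial.coeff_C]
        simp
    | add s t hs ht => simp [add_mul, map_add, hs, ht]
  have h2 : ∀ t : B ⊗[k] B,
      Φ ((TensorProduct.map CL CL t) * ((X : Polynomial B) ⊗ₜ[k] 1))
        = (TensorProduct.lid k B) (TensorProduct.map εB LinearMap.id t) := by
    intro t
    induction t using TensorProduct.induction_on with
    | zero => simp
    | tmul u v =>
        simp [hCL, Algebra.TensorProduct.tmul_mul_tmul, hΦ, Polynomial.coeff_C_mul]
    | add s t hs ht => simp [add_mul, map_add, hs, ht]
  have h3 : ∀ t s : B ⊗[k] B,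
      Φ ((TensorProduct.map CL CL t) * (TensorProduct.map CL CL s)) = 0 := by
    intro t
    induction t using TensorProduct.induction_on with
    | zero => intro s; simp
    | tmul u v =>
        intro s
        induction s using TensorProduct.induction_on with
        | zero => simp
        | tmul c d =>
            rw [TensorProduct.map_tmul, TensorProduct.map_tmul, hCL u, hCL v, hCL c, hCL d,
              Algebra.TensorProduct.tmul_mul_tmul, hΦ, ← Polynomial.C_mul, Polynomial.coeff_C]
            simp
        | add s t hs ht => rw [map_add, mul_add, map_add, hs, ht, add_zero]
    | add s t hs ht => intro u; rw [map_add, add_mul, map_add, hs u, ht u, add_zero]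
  have h4 : ∀ t : B ⊗[k] B, Φ (TensorProduct.map CL CL t) = 0 := by
    intro t
    induction t using TensorProduct.induction_on with
    | zero => simp
    | tmul u v => simp [hCL, hΦ, Polynomial.coeff_C]
    | add s t hs ht => simp [map_add, hs, ht]
  -- Φ on the various pieces of the right-hand side
  have h5 : ∀ t : B ⊗[k] B,
      Φ (BrTR ((C g) ⊗ₜ[k] (X : Polynomial B)) (TensorProduct.map CL CL t)) = 0 := by
    intro t
    induction t using TensorProduct.induction_on with
    | zero => simp
    | tmul c d =>
        rw [TensorProduct.map_tmul, hCL c, hCL d, hBrTR, hBrRC, map_add Φ, hΦ, hΦ,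
          ← Polynomial.C_mul, Polynomial.coeff_C, Polynomial.coeff_C]
        simp
    | add s t hs ht =>
        rw [map_add (TensorProduct.map CL CL), map_add (BrTR _), map_add Φ, hs, ht, add_zero]
  have h6 : ∀ t : B ⊗[k] B,
      Φ (BrTR ((X : Polynomial B) ⊗ₜ[k] 1) (TensorProduct.map CL CL t))
        = (TensorProduct.lid k B)
            (TensorProduct.map (εB ∘ₗ α) LinearMap.id t) := by
    intro t
    induction t using TensorProduct.induction_on with
    | zero => simp
    | tmul c d =>
        rw [TensorProduct.map_tmul, hCL c, hCL d, hBrTR, hBr1, hBrRX,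
          TensorProduct.tmul_zero, zero_add, hΦ]
        simp [Polynomial.coeff_C, Polynomial.coeff_C_mul]
    | add s t hs ht =>
        rw [map_add (TensorProduct.map CL CL), map_add (BrTR _), map_add Φ, hs, ht]
        rw [map_add (TensorProduct.map (εB ∘ₗ α) LinearMap.id),
          map_add (TensorProduct.lid k B)]
  have h7 : ∀ s t : B ⊗[k] B,
      Φ (BrTR (TensorProduct.map CL CL s) (TensorProduct.map CL CL t)) = 0 := by
    intro s
    induction s using TensorProduct.induction_on with
    | zero =>
        intro t
        rw [map_zero (TensorProduct.map CL CL), map_zero BrTR, LinearMap.zero_apply,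
          map_zero Φ]
    | tmul u v =>
        intro t
        induction t using TensorProduct.induction_on with
        | zero => rw [map_zero (TensorProduct.map CL CL), map_zero (BrTR _), map_zero Φ]
        | tmul c d =>
            rw [TensorProduct.map_tmul, TensorProduct.map_tmul, hCL u, hCL v, hCL c, hCL d,
              hBrTR, hBrRC, hBrRC, map_add Φ, hΦ, hΦ, ← Polynomial.C_mul,
              Polynomial.coeff_C, Polynomial.coeff_C]
            simp
        | add s t hs ht =>
            rw [map_add (TensorProduct.map CL CL), map_add (BrTR _), map_add Φ, hs, ht,
              add_zero]
    | add s t hs ht =>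
        intro u
        rw [map_add (TensorProduct.map CL CL), map_add BrTR, LinearMap.add_apply,
          map_add Φ, hs u, ht u, add_zero]
  refine ⟨?_, ?_⟩
  · intro b
    have key := congrArg Φ (compatR X (C b))
    rw [hBrRX, map_add ΔR, map_mul, hΔC, hΔC, hΔC, hΔX] at key
    rw [mul_add, mul_add] at key
    rw [map_add Φ, map_add Φ, map_add Φ, h1, h2, h3, h4, hcount] at key
    rw [map_add BrTR, map_add BrTR, LinearMap.add_apply, LinearMap.add_apply,
      map_add Φ, map_add Φ, h5, h6, h7] at key
    simpa using key
  · intro a b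
    simp only [LinearMap.comp_apply, hαmul, map_add, hεB, Bialgebra.counit_mul]
    ring
end

section
/- Let A be a Poisson algebra over k and Ω_A its module of Kähler differentials. Then the pair (A, Ω_A) is a Lie–Rinehart algebra, where the bracket on Ω_A is determined by [a df, b dg] = ab d{f,g} + a{f,b} dg − b{g,a} df and the anchor map ρ sends df to the derivation {f, ·}. -/
open KaehlerDifferential

section Aux
variable {k A : Type*} [Field k] [CommRing A] [Algebra k A]
variable (Br : A →ₗ[k] A →ₗ[k] A)

namespace KLR

/-- `a ↦ a • m` as a `k`-linear map. -/
noncomputable def msmul (m : Ω[A⁄k]) : A →ₗ[k] Ω[A⁄k] where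
  toFun a := a • m
  map_add' x y := add_smul x y m
  map_smul' r a := by simp [smul_assoc]

variable (k A) in
noncomputable def lieAux (X : Derivation k A A) : (A →₀ A) →ₗ[k] Ω[A⁄k] :=
  Finsupp.lsum k fun g => msmul (D k A (X g)) + (msmul (D k A g)).comp (X : A →ₗ[k] A)

lemma lieAux_single (X : Derivation k A A) (g a : A) :
    lieAux k A X (Finsupp.single g a) = a • D k A (X g) + X a • D k A g := by
  simp [lieAux, msmul]

lemma lieAux_kerTotal (X : Derivation k A A) (x : A →₀ A) (hx : x ∈ kerTotal k A) :
    lieAux k A X x = 0 := by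
  have key : ∀ a : A, lieAux k A X (a • x) = 0 := by
    induction hx using Submodule.span_induction with
    | mem y hy =>
      intro a
      rcases hy with (⟨⟨u, v⟩, rfl⟩ | ⟨⟨u, v⟩, rfl⟩) | ⟨r, rfl⟩
      · simp only [smul_add, smul_sub, Finsupp.smul_single, smul_eq_mul, mul_one, map_add,
          map_sub, lieAux_single, X.map_add]
        abel
      · simp only [smul_add, smul_sub, Finsupp.smul_single, smul_eq_mul, mul_one, map_add,
          map_sub, lieAux_single, X.leibniz, smul_eq_mul, Derivation.leibniz]
        module
      · simp only [Finsupp.smul_single, smul_eq_mul, mul_one, lieAux_single,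
          X.map_algebraMap, Derivation.map_algebraMap]
        simp
    | zero => intro a; simp
    | add y z _ _ ihy ihz => intro a; rw [smul_add, map_add, ihy a, ihz a, add_zero]
    | smul b y _ ih => intro a; rw [smul_smul]; exact ih (a * b)
  simpa using key 1

variable (k A) in
noncomputable def lieDer (X : Derivation k A A) : Ω[A⁄k] →ₗ[k] Ω[A⁄k] :=
  (Submodule.liftQ ((kerTotal k A).restrictScalars k) (lieAux k A X)
      (fun x hx => lieAux_kerTotal X x hx)) ∘ₗ
    (Submodule.Quotient.restrictScalarsEquiv k (kerTotal k A)).symm.toLinearMap ∘ₗ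
    ((quotKerTotalEquiv k A).symm.restrictScalars k).toLinearMap

lemma lieDer_smul_D (X : Derivation k A A) (a f : A) :
    lieDer k A X (a • D k A f) = a • D k A (X f) + X a • D k A f := by
  have h0 : (quotKerTotalEquiv k A).symm (D k A f)
      = Submodule.Quotient.mk (Finsupp.single f 1) :=
    Derivation.congr_fun (quotKerTotalEquiv_symm_comp_D k A) f
  have h1 : (quotKerTotalEquiv k A).symm (a • D k A f)
      = Submodule.Quotient.mk (Finsupp.single f a) := by
    rw [map_smul, h0, ← Submodule.Quotient.mk_smul, Finsupp.smul_single, smul_eq_mul, mul_one]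
  simp only [lieDer, LinearMap.comp_apply, LinearEquiv.coe_coe, LinearEquiv.restrictScalars_apply,
    h1, Submodule.Quotient.restrictScalarsEquiv_symm_mk, Submodule.liftQ_apply, lieAux_single]
  exact lieAux_single X f a


lemma br_one (leibniz : ∀ a b c, Br a (b * c) = Br a b * c + b * Br a c) (a : A) :
    Br a 1 = 0 := by
  have := leibniz a 1 1
  rw [mul_one, mul_one, one_mul] at this
  exact (left_eq_add.mp this)

/-- `{f, ·}` as a derivation. -/
noncomputable def brDer (leibniz : ∀ a b c, Br a (b * c) = Br a b * c + b * Br a c)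
    (f : A) : Derivation k A A where
  toLinearMap := Br f
  map_one_eq_zero' := br_one Br leibniz f
  leibniz' a b := by
    show Br f (a * b) = a • Br f b + b • Br f a
    rw [leibniz f a b, smul_eq_mul, smul_eq_mul]
    ring

@[simp] lemma brDer_apply (leibniz) (f a : A) : brDer Br leibniz f a = Br f a := rfl

/-- The derivation `f ↦ {f, ·}` valued in derivations. -/
noncomputable def brD (skew : ∀ a b, Br a b = - Br b a)
    (leibniz : ∀ a b c, Br a (b * c) = Br a b * c + b * Br a c) :
    Derivation k A (Derivation k A A) where
  toLinearMap :=
    { toFun := fun f => brDer Br leibniz f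
      map_add' := fun f g => by ext a; simp
      map_smul' := fun r f => by ext a; simp }
  map_one_eq_zero' := by
    ext a
    show Br 1 a = 0
    rw [skew 1 a, br_one Br leibniz a, neg_zero]
  leibniz' f g := by
    ext c
    show Br (f * g) c = (f • brDer Br leibniz g + g • brDer Br leibniz f) c
    rw [Derivation.add_apply, Derivation.smul_apply, Derivation.smul_apply, brDer_apply,
      brDer_apply, skew (f*g) c, leibniz c f g, skew f c, skew g c, smul_eq_mul, smul_eq_mul]
    ring

@[simp] lemma brD_apply (skew) (leibniz) (f a : A) : brD Br skew leibniz f a = Br f a := rfl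


section ExtGen
variable {M : Type*} [AddCommGroup M] [Module k M]

omit [Module k M] in
lemma ext_gen (F G : Ω[A⁄k] → M)
    (hFadd : ∀ x y, F (x + y) = F x + F y) (hGadd : ∀ x y, G (x + y) = G x + G y)
    (h : ∀ (a f : A), F (a • D k A f) = G (a • D k A f)) (x : Ω[A⁄k]) : F x = G x := by
  have hF0 : F 0 = 0 := by
    have := hFadd 0 0; rw [add_zero] at this; exact (left_eq_add.mp this)
  have hG0 : G 0 = 0 := by
    have := hGadd 0 0; rw [add_zero] at this; exact (left_eq_add.mp this)
  have hx : x ∈ Submodule.span A (Set.range (D k A)) := by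
    rw [span_range_derivation]; trivial
  have key : ∀ a : A, F (a • x) = G (a • x) := by
    induction hx using Submodule.span_induction with
    | mem y hy => obtain ⟨f, rfl⟩ := hy; exact fun a => h a f
    | zero => intro a; rw [smul_zero, hF0, hG0]
    | add y z _ _ ihy ihz => intro a; rw [smul_add, hFadd, hGadd, ihy a, ihz a]
    | smul b y _ ih => intro a; rw [smul_smul]; exact ih (a * b)
  simpa using key 1

end ExtGen

lemma lieDer_add (X Y : Derivation k A A) (x : Ω[A⁄k]) :
    lieDer k A (X + Y) x = lieDer k A X x + lieDer k A Y x := by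
  refine ext_gen (lieDer k A (X + Y)) (fun x => lieDer k A X x + lieDer k A Y x)
    (map_add _) (fun u v => by rw [map_add, map_add]; abel) (fun a f => ?_) x
  simp only [lieDer_smul_D, Derivation.add_apply, map_add]
  module

lemma lieDer_ksmul (r : k) (X : Derivation k A A) (x : Ω[A⁄k]) :
    lieDer k A (r • X) x = r • lieDer k A X x := by
  refine ext_gen (lieDer k A (r • X)) (fun x => r • lieDer k A X x)
    (map_add _) (fun u v => by simp only [map_add]; module) (fun a f => ?_) x
  simp only [lieDer_smul_D, Derivation.smul_apply, Derivation.map_smul]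
  rw [show ∀ x : A, r • x = algebraMap k A r * x from fun x => Algebra.smul_def r x,
    show ∀ m : Ω[A⁄k], r • m = algebraMap k A r • m from fun m => (algebraMap_smul A r m).symm,
    show ∀ m : Ω[A⁄k], r • m = algebraMap k A r • m from fun m => (algebraMap_smul A r m).symm]
  module

variable (k A) in
/-- The anchor map. -/
noncomputable def rho (skew : ∀ a b, Br a b = - Br b a)
    (leibniz : ∀ a b c, Br a (b * c) = Br a b * c + b * Br a c) :
    Ω[A⁄k] →ₗ[A] Derivation k A A :=
  (brD Br skew leibniz).liftKaehlerDifferential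

@[simp] lemma rho_D (skew) (leibniz) (f : A) :
    rho k A Br skew leibniz (D k A f) = brDer Br leibniz f :=
  Derivation.liftKaehlerDifferential_comp_D _ f

lemma rho_smul_D (skew) (leibniz) (a f : A) :
    rho k A Br skew leibniz (a • D k A f) = a • brDer Br leibniz f := by
  rw [map_smul, rho_D]

/-- contraction of a 1-form against a derivation -/
noncomputable def iota (X : Derivation k A A) : Ω[A⁄k] →ₗ[A] A :=
  X.liftKaehlerDifferential

@[simp] lemma iota_smul_D (X : Derivation k A A) (a f : A) :
    iota X (a • D k A f) = a * X f := by
  rw [iota, map_smul, Derivation.liftKaehlerDifferential_comp_D, smul_eq_mul]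

lemma iota_add (X Y : Derivation k A A) (x : Ω[A⁄k]) :
    iota (X + Y) x = iota X x + iota Y x := by
  refine ext_gen (iota (X + Y)) (fun x => iota X x + iota Y x)
    (map_add _) (fun u v => by rw [map_add, map_add]; abel) (fun a f => ?_) x
  rw [iota_smul_D, iota_smul_D, iota_smul_D, Derivation.add_apply, mul_add]

lemma iota_ksmul (r : k) (X : Derivation k A A) (x : Ω[A⁄k]) :
    iota (r • X) x = r • iota X x := by
  refine ext_gen (iota (r • X)) (fun x => r • iota X x)
    (map_add _) (fun u v => by simp only [map_add]; module) (fun a f => ?_) x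
  rw [iota_smul_D, iota_smul_D, Derivation.smul_apply, Algebra.mul_smul_comm]


variable (k A) in
/-- The Koszul bracket on 1-forms. -/
noncomputable def brk (skew : ∀ a b, Br a b = - Br b a)
    (leibniz : ∀ a b c, Br a (b * c) = Br a b * c + b * Br a c) :
    Ω[A⁄k] →ₗ[k] Ω[A⁄k] →ₗ[k] Ω[A⁄k] :=
  LinearMap.mk₂ k (fun ω η => lieDer k A (rho k A Br skew leibniz ω) η
      - lieDer k A (rho k A Br skew leibniz η) ω
      - D k A (iota (rho k A Br skew leibniz ω) η))
    (fun ω ω' η => by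
      simp only [map_add, LinearMap.add_apply, lieDer_add, iota_add]
      abel)
    (fun r ω η => by
      simp only [LinearMap.map_smul_of_tower, lieDer_ksmul, iota_ksmul, map_smul,
        Derivation.map_smul]
      rw [show ∀ m : Ω[A⁄k], r • m = algebraMap k A r • m from
        fun m => (algebraMap_smul A r m).symm]
      module)
    (fun ω η η' => by
      simp only [map_add, lieDer_add, iota_add]
      abel)
    (fun r ω η => by
      simp only [LinearMap.map_smul_of_tower, lieDer_ksmul, iota_ksmul, map_smul,
        Derivation.map_smul]
      rw [show ∀ m : Ω[A⁄k], r • m = algebraMap k A r • m from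
        fun m => (algebraMap_smul A r m).symm]
      module)


variable {Br} in
lemma brk_formula (skew : ∀ a b, Br a b = - Br b a)
    (leibniz : ∀ a b c, Br a (b * c) = Br a b * c + b * Br a c) (a b f g : A) :
    brk k A Br skew leibniz (a • D k A f) (b • D k A g) =
      (a * b) • D k A (Br f g) + (a * Br f b) • D k A g - (b * Br g a) • D k A f := by
  rw [brk, LinearMap.mk₂_apply, rho_smul_D, rho_smul_D, lieDer_smul_D, lieDer_smul_D,
    iota_smul_D]
  simp only [Derivation.smul_apply, smul_eq_mul, brDer_apply]
  rw [skew g f]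
  simp only [mul_neg, map_neg, Derivation.leibniz, smul_eq_mul]
  module


variable {Br}
variable (skew : ∀ a b, Br a b = - Br b a)
    (jacobi : ∀ a b c, Br a (Br b c) = Br (Br a b) c + Br b (Br a c))
    (leibniz : ∀ a b c, Br a (b * c) = Br a b * c + b * Br a c)

lemma brk_skew (ω η : Ω[A⁄k]) :
    brk k A Br skew leibniz ω η = - brk k A Br skew leibniz η ω := by
  refine ext_gen (fun ω => brk k A Br skew leibniz ω η)
    (fun ω => - brk k A Br skew leibniz η ω)
    (fun x y => by simp only [map_add, LinearMap.add_apply])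
    (fun x y => by simp only [map_add, neg_add]) (fun a f => ?_) ω
  refine ext_gen (fun η => brk k A Br skew leibniz (a • D k A f) η)
    (fun η => - brk k A Br skew leibniz η (a • D k A f))
    (fun x y => by simp only [map_add])
    (fun x y => by simp only [map_add, LinearMap.add_apply, neg_add]) (fun b g => ?_) η
  rw [brk_formula skew leibniz, brk_formula skew leibniz, skew g f, skew g a, skew f b]
  simp only [mul_neg, map_neg, neg_smul]
  module

lemma brk_compat (a : A) (ω η : Ω[A⁄k]) :
    brk k A Br skew leibniz ω (a • η) =
      a • brk k A Br skew leibniz ω η + (rho k A Br skew leibniz ω a) • η := by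
  refine ext_gen (fun ω => brk k A Br skew leibniz ω (a • η))
    (fun ω => a • brk k A Br skew leibniz ω η + (rho k A Br skew leibniz ω a) • η)
    (fun x y => by simp only [map_add, LinearMap.add_apply])
    (fun x y => by
      simp only [map_add, LinearMap.add_apply, Derivation.add_apply, smul_add, add_smul]
      abel)
    (fun c f => ?_) ω
  refine ext_gen (fun η => brk k A Br skew leibniz (c • D k A f) (a • η))
    (fun η => a • brk k A Br skew leibniz (c • D k A f) η
      + (rho k A Br skew leibniz (c • D k A f) a) • η)
    (fun x y => by simp only [smul_add, map_add, LinearMap.add_apply]; try abel)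
    (fun x y => by simp only [map_add, smul_add, LinearMap.add_apply]; try abel)
    (fun b g => ?_) η
  rw [smul_smul, brk_formula skew leibniz, brk_formula skew leibniz, rho_smul_D, smul_smul,
    leibniz f a b]
  simp only [Derivation.smul_apply, smul_eq_mul, brDer_apply, mul_add]
  module


include jacobi in
lemma brk_anchor (ω η : Ω[A⁄k]) :
    rho k A Br skew leibniz (brk k A Br skew leibniz ω η) =
      ⁅rho k A Br skew leibniz ω, rho k A Br skew leibniz η⁆ := by
  refine ext_gen (fun ω => rho k A Br skew leibniz (brk k A Br skew leibniz ω η))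
    (fun ω => ⁅rho k A Br skew leibniz ω, rho k A Br skew leibniz η⁆)
    (fun x y => by simp only [map_add, LinearMap.add_apply])
    (fun x y => by simp only [map_add, add_lie]) (fun a f => ?_) ω
  refine ext_gen
    (fun η => rho k A Br skew leibniz (brk k A Br skew leibniz (a • D k A f) η))
    (fun η => ⁅rho k A Br skew leibniz (a • D k A f), rho k A Br skew leibniz η⁆)
    (fun x y => by simp only [map_add])
    (fun x y => by simp only [map_add, lie_add]) (fun b g => ?_) η
  rw [brk_formula skew leibniz]
  ext c
  simp only [map_add, map_sub, map_smul, rho_D, rho_smul_D, Derivation.add_apply,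
    Derivation.sub_apply, Derivation.smul_apply, Derivation.commutator_apply, brDer_apply,
    smul_eq_mul]
  rw [leibniz f b (Br g c), leibniz g a (Br f c), jacobi f g c]
  ring

lemma brk_D (f g : A) :
    brk k A Br skew leibniz (D k A f) (D k A g) = D k A (Br f g) := by
  have h := brk_formula skew leibniz (1 : A) 1 f g
  simpa [br_one Br leibniz] using h

lemma brk_compat' (c : A) (ω η : Ω[A⁄k]) :
    brk k A Br skew leibniz (c • ω) η =
      c • brk k A Br skew leibniz ω η - (rho k A Br skew leibniz η c) • ω := by
  rw [brk_skew skew leibniz (c • ω) η, brk_compat skew leibniz c η ω,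
    brk_skew skew leibniz η ω]
  module

variable (k A Br) in
/-- The jacobiator. -/
noncomputable def Jac (ω η ζ : Ω[A⁄k]) : Ω[A⁄k] :=
  brk k A Br skew leibniz ω (brk k A Br skew leibniz η ζ)
    - brk k A Br skew leibniz (brk k A Br skew leibniz ω η) ζ
    - brk k A Br skew leibniz η (brk k A Br skew leibniz ω ζ)

include jacobi

lemma Jac_smul_right (c : A) (ω η ζ : Ω[A⁄k]) :
    Jac k A Br skew leibniz ω η (c • ζ) = c • Jac k A Br skew leibniz ω η ζ := by
  simp only [Jac, brk_compat skew leibniz, brk_compat' skew leibniz, map_add, map_sub,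
    map_smul, LinearMap.add_apply, LinearMap.sub_apply, brk_anchor skew jacobi leibniz,
    Derivation.commutator_apply, Derivation.smul_apply, smul_eq_mul]
  module

lemma Jac_smul_mid (c : A) (ω η ζ : Ω[A⁄k]) :
    Jac k A Br skew leibniz ω (c • η) ζ = c • Jac k A Br skew leibniz ω η ζ := by
  simp only [Jac, brk_compat skew leibniz, brk_compat' skew leibniz, map_add, map_sub,
    map_smul, LinearMap.add_apply, LinearMap.sub_apply, brk_anchor skew jacobi leibniz,
    Derivation.commutator_apply, Derivation.smul_apply, smul_eq_mul]
  module

lemma Jac_smul_left (c : A) (ω η ζ : Ω[A⁄k]) :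
    Jac k A Br skew leibniz (c • ω) η ζ = c • Jac k A Br skew leibniz ω η ζ := by
  simp only [Jac, brk_compat skew leibniz, brk_compat' skew leibniz, map_add, map_sub,
    map_smul, LinearMap.add_apply, LinearMap.sub_apply, brk_anchor skew jacobi leibniz,
    Derivation.commutator_apply, Derivation.smul_apply, smul_eq_mul]
  rw [brk_skew skew leibniz η ω]
  module


lemma Jac_zero (ω η ζ : Ω[A⁄k]) : Jac k A Br skew leibniz ω η ζ = 0 := by
  refine ext_gen (fun ζ => Jac k A Br skew leibniz ω η ζ) (fun _ => 0)
    (fun x y => by simp only [Jac, map_add]; abel) (fun _ _ => by simp)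
    (fun c h => ?_) ζ
  rw [Jac_smul_right skew jacobi leibniz]
  suffices h1 : Jac k A Br skew leibniz ω η (D k A h) = 0 by rw [h1, smul_zero]
  refine ext_gen (fun η => Jac k A Br skew leibniz ω η (D k A h)) (fun _ => 0)
    (fun x y => by simp only [Jac, map_add, LinearMap.add_apply]; abel) (fun _ _ => by simp)
    (fun b g => ?_) η
  rw [Jac_smul_mid skew jacobi leibniz]
  suffices h2 : Jac k A Br skew leibniz ω (D k A g) (D k A h) = 0 by rw [h2, smul_zero]
  refine ext_gen (fun ω => Jac k A Br skew leibniz ω (D k A g) (D k A h)) (fun _ => 0)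
    (fun x y => by simp only [Jac, map_add, LinearMap.add_apply]; abel) (fun _ _ => by simp)
    (fun a f => ?_) ω
  rw [Jac_smul_left skew jacobi leibniz]
  suffices h3 : Jac k A Br skew leibniz (D k A f) (D k A g) (D k A h) = 0 by rw [h3, smul_zero]
  simp only [Jac, brk_D skew leibniz]
  rw [jacobi f g h, map_add]
  abel

end KLR
end Aux


open KLR in
/-- For a Poisson algebra `A`, the Kähler differentials `Ω_{A/k}` form a
Lie–Rinehart algebra over `A`, with bracket
`[a df, b dg] = ab d{f,g} + a{f,b} dg − b{g,a} df` and anchor `ρ(df) = {f, ·}`. -/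
theorem kaehler_lie_rinehart (k A : Type*) [Field k] [CommRing A] [Algebra k A]
    (Br : A →ₗ[k] A →ₗ[k] A)
    (skew : ∀ a b, Br a b = - Br b a)
    (jacobi : ∀ a b c, Br a (Br b c) = Br (Br a b) c + Br b (Br a c))
    (leibniz : ∀ a b c, Br a (b * c) = Br a b * c + b * Br a c) :
    ∃ (br : Ω[A⁄k] →ₗ[k] Ω[A⁄k] →ₗ[k] Ω[A⁄k]) (ρ : Ω[A⁄k] →ₗ[A] Derivation k A A),
      -- `br` is a Lie bracket on `Ω_{A/k}`
      (∀ ω η, br ω η = - br η ω) ∧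
      (∀ ω η ζ, br ω (br η ζ) = br (br ω η) ζ + br η (br ω ζ)) ∧
      -- the defining formula `[a df, b dg] = ab d{f,g} + a{f,b} dg − b{g,a} df`
      (∀ (a b f g : A),
        br (a • (D k A f)) (b • (D k A g)) =
          (a * b) • D k A (Br f g) + (a * Br f b) • D k A g - (b * Br g a) • D k A f) ∧
      -- the anchor sends `df` to `{f, ·}` and is a morphism of Lie algebras
      (∀ f a : A, ρ (D k A f) a = Br f a) ∧
      (∀ ω η, ρ (br ω η) = ⁅ρ ω, ρ η⁆) ∧
      -- the Lie–Rinehart compatibility `[ξ, a·ζ] = a·[ξ,ζ] + ρ(ξ)(a)·ζ`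
      (∀ (a : A) (ω η : Ω[A⁄k]), br ω (a • η) = a • br ω η + (ρ ω a) • η) := by
  refine ⟨brk k A Br skew leibniz, rho k A Br skew leibniz, brk_skew skew leibniz,
    fun ω η ζ => ?_, brk_formula skew leibniz, fun f a => by rw [rho_D]; rfl,
    brk_anchor skew jacobi leibniz, brk_compat skew leibniz⟩
  have h := Jac_zero skew jacobi leibniz ω η ζ
  rw [Jac, sub_sub, sub_eq_zero] at h
  exact h
end

section
/- Let A be a Poisson algebra. Then the universal enveloping algebra A^e is isomorphic to V(A, Ω_A), the enveloping algebra of the Lie–Rinehart algebra (A, Ω_A); more precisely, there is a unique algebra isomorphism Λ: V(A, Ω_A) → A^e with Λ∘α = m and Λ∘β = h, where m, h are the structure maps of A^e. -/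
open KaehlerDifferential

/-- The enveloping algebra `V(A, Ω_A) = U(A ⋊ Ω_A)/P` of the Lie–Rinehart algebra
`(A, Ω_A)`, presented by generators `A ⊕ Ω_A` and the defining relations. -/
inductive LieRinehartEnvRel (k A : Type*) [Field k] [CommRing A] [Algebra k A]
    (br : KaehlerDifferential k A →ₗ[k] KaehlerDifferential k A →ₗ[k] KaehlerDifferential k A)
    (ρ : KaehlerDifferential k A →ₗ[A] Derivation k A A) :
    FreeAlgebra k (A ⊕ KaehlerDifferential k A) →
      FreeAlgebra k (A ⊕ KaehlerDifferential k A) → Prop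
  | a_add (a b : A) : LieRinehartEnvRel k A br ρ
      (FreeAlgebra.ι k (Sum.inl (a + b)))
      (FreeAlgebra.ι k (Sum.inl a) + FreeAlgebra.ι k (Sum.inl b))
  | a_smul (c : k) (a : A) : LieRinehartEnvRel k A br ρ
      (FreeAlgebra.ι k (Sum.inl (c • a))) (c • FreeAlgebra.ι k (Sum.inl a))
  | a_mul (a b : A) : LieRinehartEnvRel k A br ρ
      (FreeAlgebra.ι k (Sum.inl (a * b)))
      (FreeAlgebra.ι k (Sum.inl a) * FreeAlgebra.ι k (Sum.inl b))
  | a_one : LieRinehartEnvRel k A br ρ (FreeAlgebra.ι k (Sum.inl (1 : A))) 1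
  | l_add (ω η : KaehlerDifferential k A) : LieRinehartEnvRel k A br ρ
      (FreeAlgebra.ι k (Sum.inr (ω + η)))
      (FreeAlgebra.ι k (Sum.inr ω) + FreeAlgebra.ι k (Sum.inr η))
  | l_smul (c : k) (ω : KaehlerDifferential k A) : LieRinehartEnvRel k A br ρ
      (FreeAlgebra.ι k (Sum.inr (c • ω))) (c • FreeAlgebra.ι k (Sum.inr ω))
  | l_mod (a : A) (ω : KaehlerDifferential k A) : LieRinehartEnvRel k A br ρ
      (FreeAlgebra.ι k (Sum.inr (a • ω)))
      (FreeAlgebra.ι k (Sum.inl a) * FreeAlgebra.ι k (Sum.inr ω))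
  | l_lie (ω η : KaehlerDifferential k A) : LieRinehartEnvRel k A br ρ
      (FreeAlgebra.ι k (Sum.inr (br ω η)))
      (FreeAlgebra.ι k (Sum.inr ω) * FreeAlgebra.ι k (Sum.inr η) -
        FreeAlgebra.ι k (Sum.inr η) * FreeAlgebra.ι k (Sum.inr ω))
  | anchor (ω : KaehlerDifferential k A) (a : A) : LieRinehartEnvRel k A br ρ
      (FreeAlgebra.ι k (Sum.inr ω) * FreeAlgebra.ι k (Sum.inl a) -
        FreeAlgebra.ι k (Sum.inl a) * FreeAlgebra.ι k (Sum.inr ω))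
      (FreeAlgebra.ι k (Sum.inl (ρ ω a)))

/-- The universal enveloping algebra `A^e` of a Poisson algebra `A`, presented by
generators `m_a` (`Sum.inl a`) and `h_a` (`Sum.inr a`) and the defining relations
`m_{xy} = m_x m_y`, `h_{{x,y}} = [h_x, h_y]`, `h_{xy} = m_y h_x + m_x h_y`,
`m_{{x,y}} = [h_x, m_y]`, `m_1 = 1`. -/
inductive PoissonEnvRel (k A : Type*) [Field k] [CommRing A] [Algebra k A]
    (Br : A →ₗ[k] A →ₗ[k] A) :
    FreeAlgebra k (A ⊕ A) → FreeAlgebra k (A ⊕ A) → Prop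
  | m_add (a b : A) : PoissonEnvRel k A Br
      (FreeAlgebra.ι k (Sum.inl (a + b)))
      (FreeAlgebra.ι k (Sum.inl a) + FreeAlgebra.ι k (Sum.inl b))
  | m_smul (c : k) (a : A) : PoissonEnvRel k A Br
      (FreeAlgebra.ι k (Sum.inl (c • a))) (c • FreeAlgebra.ι k (Sum.inl a))
  | h_add (a b : A) : PoissonEnvRel k A Br
      (FreeAlgebra.ι k (Sum.inr (a + b)))
      (FreeAlgebra.ι k (Sum.inr a) + FreeAlgebra.ι k (Sum.inr b))
  | h_smul (c : k) (a : A) : PoissonEnvRel k A Br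
      (FreeAlgebra.ι k (Sum.inr (c • a))) (c • FreeAlgebra.ι k (Sum.inr a))
  | m_mul (a b : A) : PoissonEnvRel k A Br
      (FreeAlgebra.ι k (Sum.inl (a * b)))
      (FreeAlgebra.ι k (Sum.inl a) * FreeAlgebra.ι k (Sum.inl b))
  | m_one : PoissonEnvRel k A Br (FreeAlgebra.ι k (Sum.inl (1 : A))) 1
  | h_br (a b : A) : PoissonEnvRel k A Br
      (FreeAlgebra.ι k (Sum.inr (Br a b)))
      (FreeAlgebra.ι k (Sum.inr a) * FreeAlgebra.ι k (Sum.inr b) -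
        FreeAlgebra.ι k (Sum.inr b) * FreeAlgebra.ι k (Sum.inr a))
  | h_mul (a b : A) : PoissonEnvRel k A Br
      (FreeAlgebra.ι k (Sum.inr (a * b)))
      (FreeAlgebra.ι k (Sum.inl b) * FreeAlgebra.ι k (Sum.inr a) +
        FreeAlgebra.ι k (Sum.inl a) * FreeAlgebra.ι k (Sum.inr b))
  | m_br (a b : A) : PoissonEnvRel k A Br
      (FreeAlgebra.ι k (Sum.inl (Br a b)))
      (FreeAlgebra.ι k (Sum.inr a) * FreeAlgebra.ι k (Sum.inl b) -
        FreeAlgebra.ι k (Sum.inl b) * FreeAlgebra.ι k (Sum.inr a))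


namespace PoissonEnvAux

variable {k A : Type*} [Field k] [CommRing A] [Algebra k A] (Br : A →ₗ[k] A →ₗ[k] A)

/-- The generator `m_a` in `A^e`. -/
noncomputable def mE (a : A) : RingQuot (PoissonEnvRel k A Br) :=
  RingQuot.mkAlgHom k (PoissonEnvRel k A Br) (FreeAlgebra.ι k (Sum.inl a))

/-- The generator `h_a` in `A^e`. -/
noncomputable def hEl (a : A) : RingQuot (PoissonEnvRel k A Br) :=
  RingQuot.mkAlgHom k (PoissonEnvRel k A Br) (FreeAlgebra.ι k (Sum.inr a))

theorem mE_add (a b : A) : mE Br (a + b) = mE Br a + mE Br b := by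
  have := RingQuot.mkAlgHom_rel k (PoissonEnvRel.m_add (Br := Br) a b)
  simpa [mE] using this

theorem mE_smul (c : k) (a : A) : mE Br (c • a) = c • mE Br a := by
  have := RingQuot.mkAlgHom_rel k (PoissonEnvRel.m_smul (Br := Br) c a)
  simpa [mE] using this

theorem mE_mul (a b : A) : mE Br (a * b) = mE Br a * mE Br b := by
  have := RingQuot.mkAlgHom_rel k (PoissonEnvRel.m_mul (Br := Br) a b)
  simpa [mE] using this

theorem mE_one : mE Br (1 : A) = 1 := by
  have := RingQuot.mkAlgHom_rel k (PoissonEnvRel.m_one (Br := Br))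
  simpa [mE] using this

theorem hEl_add (a b : A) : hEl Br (a + b) = hEl Br a + hEl Br b := by
  have := RingQuot.mkAlgHom_rel k (PoissonEnvRel.h_add (Br := Br) a b)
  simpa [hEl] using this

theorem hEl_smul (c : k) (a : A) : hEl Br (c • a) = c • hEl Br a := by
  have := RingQuot.mkAlgHom_rel k (PoissonEnvRel.h_smul (Br := Br) c a)
  simpa [hEl] using this

theorem hEl_br (a b : A) :
    hEl Br (Br a b) = hEl Br a * hEl Br b - hEl Br b * hEl Br a := by
  have := RingQuot.mkAlgHom_rel k (PoissonEnvRel.h_br (Br := Br) a b)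
  simpa [hEl] using this

theorem hEl_mul (a b : A) :
    hEl Br (a * b) = mE Br b * hEl Br a + mE Br a * hEl Br b := by
  have := RingQuot.mkAlgHom_rel k (PoissonEnvRel.h_mul (Br := Br) a b)
  simpa [hEl, mE] using this

theorem mE_br (a b : A) :
    mE Br (Br a b) = hEl Br a * mE Br b - mE Br b * hEl Br a := by
  have := RingQuot.mkAlgHom_rel k (PoissonEnvRel.m_br (Br := Br) a b)
  simpa [hEl, mE] using this

theorem mE_zero : mE Br (0 : A) = 0 := by
  have := mE_smul Br (0 : k) (0 : A)
  simpa using this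

theorem hEl_zero : hEl Br (0 : A) = 0 := by
  have := hEl_smul Br (0 : k) (0 : A)
  simpa using this

/-- `a ↦ m_a` as an algebra hom `A →ₐ[k] A^e`. -/
noncomputable def muHom : A →ₐ[k] RingQuot (PoissonEnvRel k A Br) where
  toFun := mE Br
  map_one' := mE_one Br
  map_mul' := mE_mul Br
  map_zero' := mE_zero Br
  map_add' := mE_add Br
  commutes' := fun c => by
    show mE Br (algebraMap k A c) = _
    rw [Algebra.algebraMap_eq_smul_one, mE_smul, mE_one, Algebra.algebraMap_eq_smul_one]

/-- `A^e` as an `A`-module via `a • x = m_a * x`. -/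
noncomputable local instance instModA : Module A (RingQuot (PoissonEnvRel k A Br)) :=
  Module.compHom _ (muHom Br).toRingHom

theorem smulA_def (a : A) (x : RingQuot (PoissonEnvRel k A Br)) :
    a • x = mE Br a * x := rfl

local instance instTower : IsScalarTower k A (RingQuot (PoissonEnvRel k A Br)) :=
  ⟨fun c a x => by
    rw [smulA_def, smulA_def, mE_smul, smul_mul_assoc]⟩

/-- `a ↦ h_a` as a `k`-derivation `A → A^e`. -/
noncomputable def hDer : Derivation k A (RingQuot (PoissonEnvRel k A Br)) where
  toFun := hEl Br
  map_add' := hEl_add Br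
  map_smul' := fun c a => hEl_smul Br c a
  map_one_eq_zero' := by
    have h := hEl_mul Br (1 : A) (1 : A)
    simp only [mul_one, mE_one, one_mul] at h
    have : hEl Br 1 + 0 = hEl Br 1 + hEl Br 1 := by rw [add_zero]; exact h
    exact ((add_left_cancel this).symm : hEl Br (1:A) = 0)
  leibniz' := fun a b => by
    simp only [LinearMap.coe_mk, AddHom.coe_mk, smulA_def]
    rw [hEl_mul, add_comm]

/-- The induced `A`-linear map `Ω[A/k] → A^e`, `a df ↦ m_a h_f`. -/
noncomputable def LMap : KaehlerDifferential k A →ₗ[A] RingQuot (PoissonEnvRel k A Br) :=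
  (hDer Br).liftKaehlerDifferential

theorem LMap_D (f : A) : LMap Br (D k A f) = hEl Br f :=
  Derivation.liftKaehlerDifferential_comp_D _ f

theorem LMap_smulD (a f : A) : LMap Br (a • D k A f) = mE Br a * hEl Br f := by
  rw [map_smul, smulA_def, LMap_D]

end PoissonEnvAux

namespace PoissonEnvAux

variable {k A : Type*} [Field k] [CommRing A] [Algebra k A] (Br : A →ₗ[k] A →ₗ[k] A)

/-- Induction principle: `Ω[A/k]` is additively generated by elements `a • D f`. -/
theorem kaehler_induction (p : KaehlerDifferential k A → Prop)
    (h0 : p 0) (hadd : ∀ x y, p x → p y → p (x + y))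
    (hgen : ∀ a f : A, p (a • D k A f)) (ω : KaehlerDifferential k A) : p ω := by
  have key : ∀ x ∈ AddSubmonoid.closure
      {x : KaehlerDifferential k A | ∃ a f : A, x = a • D k A f}, p x := by
    intro x hx
    induction hx using AddSubmonoid.closure_induction with
    | mem x hx => obtain ⟨a, f, rfl⟩ := hx; exact hgen a f
    | zero => exact h0
    | add x y _ _ px py => exact hadd x y px py
  apply key
  let T : Submodule A (KaehlerDifferential k A) :=
    { carrier := AddSubmonoid.closure {x : KaehlerDifferential k A | ∃ a f : A, x = a • D k A f}
      add_mem' := fun hx hy => AddSubmonoid.add_mem _ hx hy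
      zero_mem' := AddSubmonoid.zero_mem _
      smul_mem' := by
        intro c x hx
        induction hx using AddSubmonoid.closure_induction with
        | mem x hx =>
          obtain ⟨a, f, rfl⟩ := hx
          exact AddSubmonoid.subset_closure ⟨c * a, f, smul_smul c a _⟩
        | zero => simpa using AddSubmonoid.zero_mem _
        | add x y _ _ px py => rw [smul_add]; exact AddSubmonoid.add_mem _ px py }
  have hT : (⊤ : Submodule A (KaehlerDifferential k A)) ≤ T := by
    rw [← KaehlerDifferential.span_range_derivation]
    refine Submodule.span_le.mpr ?_
    rintro _ ⟨f, rfl⟩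
    exact AddSubmonoid.subset_closure ⟨1, f, (one_smul A _).symm⟩
  exact hT (Submodule.mem_top)

theorem key_anchor (ρ : KaehlerDifferential k A →ₗ[A] Derivation k A A)
    (hρ : ∀ f a : A, ρ (D k A f) a = Br f a)
    (ω : KaehlerDifferential k A) (a : A) :
    LMap Br ω * mE Br a - mE Br a * LMap Br ω = mE Br (ρ ω a) := by
  induction ω using kaehler_induction with
  | h0 => simp [mE_zero]
  | hadd x y px py =>
    have expand : (LMap Br x + LMap Br y) * mE Br a - mE Br a * (LMap Br x + LMap Br y) =
        (LMap Br x * mE Br a - mE Br a * LMap Br x) +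
        (LMap Br y * mE Br a - mE Br a * LMap Br y) := by noncomm_ring
    rw [map_add, expand, px, py, map_add, Derivation.add_apply, mE_add]
  | hgen b g =>
    have hρval : ρ (b • D k A g) a = b * Br g a := by
      rw [map_smul, Derivation.smul_apply, hρ, smul_eq_mul]
    rw [LMap_smulD, hρval, mE_mul]
    have hc := mE_br Br g a
    have : hEl Br g * mE Br a = mE Br a * hEl Br g + mE Br (Br g a) := by
      rw [hc]; noncomm_ring
    calc mE Br b * hEl Br g * mE Br a - mE Br a * (mE Br b * hEl Br g)
        = mE Br b * (hEl Br g * mE Br a) - mE Br a * mE Br b * hEl Br g := by noncomm_ring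
      _ = mE Br b * (mE Br a * hEl Br g + mE Br (Br g a)) -
            mE Br b * mE Br a * hEl Br g := by
            rw [this, ← mE_mul, mul_comm a b, mE_mul]
      _ = mE Br b * mE Br (Br g a) := by noncomm_ring

theorem key_lie
    (br : KaehlerDifferential k A →ₗ[k] KaehlerDifferential k A →ₗ[k] KaehlerDifferential k A)
    (hbr : ∀ (a b f g : A),
      br (a • (D k A f)) (b • (D k A g)) =
        (a * b) • D k A (Br f g) + (a * Br f b) • D k A g - (b * Br g a) • D k A f)
    (ω η : KaehlerDifferential k A) :
    LMap Br (br ω η) = LMap Br ω * LMap Br η - LMap Br η * LMap Br ω := by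
  induction ω using kaehler_induction with
  | h0 => simp
  | hadd x y px py =>
    have : br (x + y) η = br x η + br y η := by rw [map_add]; rfl
    rw [this, map_add, px, py, map_add]; noncomm_ring
  | hgen a f =>
    induction η using kaehler_induction with
    | h0 => simp
    | hadd x y px py =>
      rw [map_add, map_add, px, py, map_add]; noncomm_ring
    | hgen b g =>
      rw [hbr, map_sub, map_add, LMap_smulD, LMap_smulD, LMap_smulD, LMap_smulD, LMap_smulD,
        hEl_br]
      have h1 : hEl Br f * mE Br b = mE Br b * hEl Br f + mE Br (Br f b) := by
        rw [mE_br]; noncomm_ring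
      have h2 : hEl Br g * mE Br a = mE Br a * hEl Br g + mE Br (Br g a) := by
        rw [mE_br]; noncomm_ring
      have e1 : mE Br a * hEl Br f * (mE Br b * hEl Br g) =
          mE Br a * (mE Br b * hEl Br f + mE Br (Br f b)) * hEl Br g := by
        rw [← h1]; noncomm_ring
      have e2 : mE Br b * hEl Br g * (mE Br a * hEl Br f) =
          mE Br b * (mE Br a * hEl Br g + mE Br (Br g a)) * hEl Br f := by
        rw [← h2]; noncomm_ring
      rw [e1, e2, mE_mul, mE_mul, mE_mul]
      have comm : mE Br b * mE Br a = mE Br a * mE Br b := by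
        rw [← mE_mul, ← mE_mul, mul_comm]
      have comm4 : mE Br a * mE Br b * (hEl Br g * hEl Br f) =
          mE Br b * mE Br a * (hEl Br g * hEl Br f) := by rw [comm]
      calc mE Br a * mE Br b * (hEl Br f * hEl Br g - hEl Br g * hEl Br f) +
            mE Br a * mE Br (Br f b) * hEl Br g - mE Br b * mE Br (Br g a) * hEl Br f
          = mE Br a * mE Br b * (hEl Br f * hEl Br g) -
              mE Br a * mE Br b * (hEl Br g * hEl Br f) +
              mE Br a * mE Br (Br f b) * hEl Br g -
              mE Br b * mE Br (Br g a) * hEl Br f := by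
              try noncomm_ring
              try simp only [mul_smul_comm]
              try abel
        _ = mE Br a * mE Br b * (hEl Br f * hEl Br g) -
              mE Br b * mE Br a * (hEl Br g * hEl Br f) +
              mE Br a * mE Br (Br f b) * hEl Br g -
              mE Br b * mE Br (Br g a) * hEl Br f := by rw [comm4]
        _ = mE Br a * (mE Br b * hEl Br f + mE Br (Br f b)) * hEl Br g -
              mE Br b * (mE Br a * hEl Br g + mE Br (Br g a)) * hEl Br f := by
              try noncomm_ring
              try simp only [mul_smul_comm]
              try abel

end PoissonEnvAux

namespace PoissonEnvAux

variable {k A : Type*} [Field k] [CommRing A] [Algebra k A] (Br : A →ₗ[k] A →ₗ[k] A)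
variable (br : KaehlerDifferential k A →ₗ[k] KaehlerDifferential k A →ₗ[k] KaehlerDifferential k A)
variable (ρ : KaehlerDifferential k A →ₗ[A] Derivation k A A)

attribute [local instance] instModA instTower

/-- The generator `α_a` in `V(A, Ω_A)`. -/
noncomputable def aV (a : A) : RingQuot (LieRinehartEnvRel k A br ρ) :=
  RingQuot.mkAlgHom k (LieRinehartEnvRel k A br ρ) (FreeAlgebra.ι k (Sum.inl a))

/-- The generator `β_ω` in `V(A, Ω_A)`. -/
noncomputable def wV (ω : KaehlerDifferential k A) : RingQuot (LieRinehartEnvRel k A br ρ) :=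
  RingQuot.mkAlgHom k (LieRinehartEnvRel k A br ρ) (FreeAlgebra.ι k (Sum.inr ω))

theorem aV_add (a b : A) : aV br ρ (a + b) = aV br ρ a + aV br ρ b := by
  have := RingQuot.mkAlgHom_rel k (LieRinehartEnvRel.a_add (br := br) (ρ := ρ) a b)
  simpa [aV] using this

theorem aV_smul (c : k) (a : A) : aV br ρ (c • a) = c • aV br ρ a := by
  have := RingQuot.mkAlgHom_rel k (LieRinehartEnvRel.a_smul (br := br) (ρ := ρ) c a)
  simpa [aV] using this

theorem aV_mul (a b : A) : aV br ρ (a * b) = aV br ρ a * aV br ρ b := by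
  have := RingQuot.mkAlgHom_rel k (LieRinehartEnvRel.a_mul (br := br) (ρ := ρ) a b)
  simpa [aV] using this

theorem aV_one : aV br ρ (1 : A) = 1 := by
  have := RingQuot.mkAlgHom_rel k (LieRinehartEnvRel.a_one (br := br) (ρ := ρ))
  simpa [aV] using this

theorem wV_add (ω η : KaehlerDifferential k A) : wV br ρ (ω + η) = wV br ρ ω + wV br ρ η := by
  have := RingQuot.mkAlgHom_rel k (LieRinehartEnvRel.l_add (br := br) (ρ := ρ) ω η)
  simpa [wV] using this

theorem wV_smul (c : k) (ω : KaehlerDifferential k A) : wV br ρ (c • ω) = c • wV br ρ ω := by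
  have := RingQuot.mkAlgHom_rel k (LieRinehartEnvRel.l_smul (br := br) (ρ := ρ) c ω)
  simpa [wV] using this

theorem wV_mod (a : A) (ω : KaehlerDifferential k A) :
    wV br ρ (a • ω) = aV br ρ a * wV br ρ ω := by
  have := RingQuot.mkAlgHom_rel k (LieRinehartEnvRel.l_mod (br := br) (ρ := ρ) a ω)
  simpa [wV, aV] using this

theorem wV_lie (ω η : KaehlerDifferential k A) :
    wV br ρ (br ω η) = wV br ρ ω * wV br ρ η - wV br ρ η * wV br ρ ω := by
  have := RingQuot.mkAlgHom_rel k (LieRinehartEnvRel.l_lie (br := br) (ρ := ρ) ω η)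
  simpa [wV] using this

theorem wV_anchor (ω : KaehlerDifferential k A) (a : A) :
    wV br ρ ω * aV br ρ a - aV br ρ a * wV br ρ ω = aV br ρ (ρ ω a) := by
  have := RingQuot.mkAlgHom_rel k (LieRinehartEnvRel.anchor (br := br) (ρ := ρ) ω a)
  simpa [wV, aV] using this

theorem wV_zero : wV br ρ (0 : KaehlerDifferential k A) = 0 := by
  have := wV_smul br ρ (0 : k) 0
  simpa using this

/-- The algebra hom `V(A, Ω_A) →ₐ[k] A^e`. -/
noncomputable def LamHom
    (hbr : ∀ (a b f g : A),
      br (a • (D k A f)) (b • (D k A g)) =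
        (a * b) • D k A (Br f g) + (a * Br f b) • D k A g - (b * Br g a) • D k A f)
    (hρ : ∀ f a : A, ρ (D k A f) a = Br f a) :
    RingQuot (LieRinehartEnvRel k A br ρ) →ₐ[k] RingQuot (PoissonEnvRel k A Br) :=
  RingQuot.liftAlgHom k
    ⟨FreeAlgebra.lift k (Sum.elim (mE Br) (LMap Br)), by
      intro x y h
      induction h with
      | a_add a b => simp [FreeAlgebra.lift_ι_apply, mE_add]
      | a_smul c a => simp [FreeAlgebra.lift_ι_apply, mE_smul]
      | a_mul a b => simp [FreeAlgebra.lift_ι_apply, mE_mul]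
      | a_one => simp [FreeAlgebra.lift_ι_apply, mE_one]
      | l_add ω η => simp [FreeAlgebra.lift_ι_apply]
      | l_smul c ω =>
        simp only [map_smul, FreeAlgebra.lift_ι_apply, Sum.elim_inr]
        have hmap : mE Br (algebraMap k A c) = algebraMap k (RingQuot (PoissonEnvRel k A Br)) c :=
          (muHom Br).commutes c
        rw [← algebraMap_smul A c ω, map_smul, smulA_def, hmap, ← Algebra.smul_def]
      | l_mod a ω =>
        simp only [map_mul, FreeAlgebra.lift_ι_apply, Sum.elim_inl, Sum.elim_inr]
        rw [map_smul, smulA_def]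
      | l_lie ω η =>
        simp only [map_mul, map_sub, FreeAlgebra.lift_ι_apply, Sum.elim_inr]
        exact key_lie Br br hbr ω η
      | anchor ω a =>
        simp only [map_mul, map_sub, FreeAlgebra.lift_ι_apply, Sum.elim_inl, Sum.elim_inr]
        exact key_anchor Br ρ hρ ω a⟩

/-- The algebra hom `A^e →ₐ[k] V(A, Ω_A)`. -/
noncomputable def PsiHom
    (leibniz : ∀ a b c, Br a (b * c) = Br a b * c + b * Br a c)
    (hbr : ∀ (a b f g : A),
      br (a • (D k A f)) (b • (D k A g)) =
        (a * b) • D k A (Br f g) + (a * Br f b) • D k A g - (b * Br g a) • D k A f)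
    (hρ : ∀ f a : A, ρ (D k A f) a = Br f a) :
    RingQuot (PoissonEnvRel k A Br) →ₐ[k] RingQuot (LieRinehartEnvRel k A br ρ) :=
  RingQuot.liftAlgHom k
    ⟨FreeAlgebra.lift k (Sum.elim (aV br ρ) (fun a => wV br ρ (D k A a))), by
      have Br_one : ∀ f : A, Br f 1 = 0 := by
        intro f
        have h := leibniz f 1 1
        rw [mul_one] at h
        have : Br f 1 + 0 = Br f 1 + Br f 1 := by
          rw [add_zero]; calc Br f 1 = Br f 1 * 1 + 1 * Br f 1 := h
            _ = Br f 1 + Br f 1 := by ring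
        exact (add_left_cancel this).symm
      have DBr : ∀ f g : A, br (D k A f) (D k A g) = D k A (Br f g) := by
        intro f g
        have h := hbr 1 1 f g
        simpa [Br_one] using h
      intro x y h
      induction h with
      | m_add a b => simp [FreeAlgebra.lift_ι_apply, aV_add]
      | m_smul c a => simp [FreeAlgebra.lift_ι_apply, aV_smul]
      | h_add a b =>
        simp only [FreeAlgebra.lift_ι_apply, Sum.elim_inr, map_add]
        rw [wV_add]
      | h_smul c a =>
        simp only [map_smul, FreeAlgebra.lift_ι_apply, Sum.elim_inr]
        rw [Derivation.map_smul, wV_smul]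
      | m_mul a b => simp [FreeAlgebra.lift_ι_apply, aV_mul]
      | m_one => simp [FreeAlgebra.lift_ι_apply, aV_one]
      | h_br a b =>
        simp only [map_mul, map_sub, FreeAlgebra.lift_ι_apply, Sum.elim_inr]
        rw [← DBr, wV_lie]
      | h_mul a b =>
        simp only [map_mul, map_add, FreeAlgebra.lift_ι_apply, Sum.elim_inl, Sum.elim_inr]
        rw [Derivation.leibniz, wV_add, wV_mod, wV_mod, add_comm]
      | m_br a b =>
        simp only [map_mul, map_sub, FreeAlgebra.lift_ι_apply, Sum.elim_inl, Sum.elim_inr]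
        rw [wV_anchor, hρ]⟩

end PoissonEnvAux

open PoissonEnvAux

/-- For a Poisson algebra `A`, the universal enveloping algebra `A^e`
is isomorphic to `V(A, Ω_A)`: there is a unique algebra isomorphism
`Λ : V(A, Ω_A) → A^e` with `Λ∘α = m` and `Λ∘β = h`. -/

theorem poisson_env_iso_lie_rinehart_env
    (k A : Type*) [Field k] [CommRing A] [Algebra k A]
    (Br : A →ₗ[k] A →ₗ[k] A)
    (skew : ∀ a b, Br a b = - Br b a)
    (jacobi : ∀ a b c, Br a (Br b c) = Br (Br a b) c + Br b (Br a c))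
    (leibniz : ∀ a b c, Br a (b * c) = Br a b * c + b * Br a c)
    -- the Lie–Rinehart structure on `Ω_{A/k}` induced by the Poisson bracket
    (br : KaehlerDifferential k A →ₗ[k] KaehlerDifferential k A →ₗ[k] KaehlerDifferential k A)
    (ρ : KaehlerDifferential k A →ₗ[A] Derivation k A A)
    (hbr : ∀ (a b f g : A),
      br (a • (D k A f)) (b • (D k A g)) =
        (a * b) • D k A (Br f g) + (a * Br f b) • D k A g - (b * Br g a) • D k A f)
    (hρ : ∀ f a : A, ρ (D k A f) a = Br f a) :
    ∃! Λ : RingQuot (LieRinehartEnvRel k A br ρ) ≃ₐ[k] RingQuot (PoissonEnvRel k A Br),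
      ∀ a : A,
        Λ (RingQuot.mkAlgHom k (LieRinehartEnvRel k A br ρ) (FreeAlgebra.ι k (Sum.inl a))) =
          RingQuot.mkAlgHom k (PoissonEnvRel k A Br) (FreeAlgebra.ι k (Sum.inl a)) ∧
        Λ (RingQuot.mkAlgHom k (LieRinehartEnvRel k A br ρ)
            (FreeAlgebra.ι k (Sum.inr (D k A a)))) =
          RingQuot.mkAlgHom k (PoissonEnvRel k A Br) (FreeAlgebra.ι k (Sum.inr a)) := by
  letI := instModA (k := k) (A := A) Br
  letI := instTower (k := k) (A := A) Br
  set Λh := LamHom Br br ρ hbr hρ with hΛh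
  set Ψh := PsiHom Br br ρ leibniz hbr hρ with hΨh
  have hΛa : ∀ a : A, Λh (aV br ρ a) = mE Br a := fun a => by
    rw [hΛh, LamHom, aV, RingQuot.liftAlgHom_mkAlgHom_apply, FreeAlgebra.lift_ι_apply]
    rfl
  have hΛw : ∀ ω, Λh (wV br ρ ω) = LMap Br ω := fun ω => by
    rw [hΛh, LamHom, wV, RingQuot.liftAlgHom_mkAlgHom_apply, FreeAlgebra.lift_ι_apply]
    rfl
  have hΨm : ∀ a : A, Ψh (mE Br a) = aV br ρ a := fun a => by
    rw [hΨh, PsiHom, mE, RingQuot.liftAlgHom_mkAlgHom_apply, FreeAlgebra.lift_ι_apply]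
    rfl
  have hΨe : ∀ a : A, Ψh (hEl Br a) = wV br ρ (D k A a) := fun a => by
    rw [hΨh, PsiHom, hEl, RingQuot.liftAlgHom_mkAlgHom_apply, FreeAlgebra.lift_ι_apply]
    rfl
  have hΨL : ∀ ω, Ψh (LMap Br ω) = wV br ρ ω := by
    intro ω
    induction ω using kaehler_induction with
    | h0 => simp [wV_zero]
    | hadd x y px py => rw [map_add, map_add, px, py, wV_add]
    | hgen a f => rw [LMap_smulD, map_mul, hΨm, hΨe, ← wV_mod]
  have left : Λh.comp Ψh = AlgHom.id k (RingQuot (PoissonEnvRel k A Br)) := by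
    apply RingQuot.ringQuot_ext'
    apply FreeAlgebra.hom_ext
    funext x
    rcases x with a | a
    · show Λh (Ψh (mE Br a)) = mE Br a
      rw [hΨm, hΛa]
    · show Λh (Ψh (hEl Br a)) = hEl Br a
      rw [hΨe, hΛw, LMap_D]
  have right : Ψh.comp Λh = AlgHom.id k (RingQuot (LieRinehartEnvRel k A br ρ)) := by
    apply RingQuot.ringQuot_ext'
    apply FreeAlgebra.hom_ext
    funext x
    rcases x with a | ω
    · show Ψh (Λh (aV br ρ a)) = aV br ρ a
      rw [hΛa, hΨm]
    · show Ψh (Λh (wV br ρ ω)) = wV br ρ ω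
      rw [hΛw, hΨL]
  refine ⟨AlgEquiv.ofAlgHom Λh Ψh left right, fun a => ⟨?_, ?_⟩, ?_⟩
  · exact hΛa a
  · exact (hΛw (D k A a)).trans (LMap_D Br a)
  · intro Λ' hΛ'
    have hcoe : (Λ' : RingQuot (LieRinehartEnvRel k A br ρ) →ₐ[k]
        RingQuot (PoissonEnvRel k A Br)) = Λh := by
      apply RingQuot.ringQuot_ext'
      apply FreeAlgebra.hom_ext
      funext x
      rcases x with a | ω
      · show Λ' (aV br ρ a) = Λh (aV br ρ a)
        rw [hΛa]; exact (hΛ' a).1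
      · show Λ' (wV br ρ ω) = Λh (wV br ρ ω)
        rw [hΛw]
        induction ω using kaehler_induction with
        | h0 => rw [wV_zero, map_zero, map_zero]
        | hadd x y px py => rw [wV_add, map_add, map_add, px, py]
        | hgen a f =>
          rw [wV_mod, map_mul, LMap_smulD]
          exact congrArg₂ (· * ·) ((hΛ' a).1) ((hΛ' f).2)
    exact AlgEquiv.ext fun x => DFunLike.congr_fun hcoe x
end

section
/- Let A be a Poisson algebra. Then A^e ≅ A ⊕ I as left A-modules, where I is the left ideal of A^e generated by {h_x : x ∈ A}; equivalently, the A^e-module map ξ: A^e → A sending 1 to 1 splits the structure map m: A → A^e as left A-module maps, with kernel I. -/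
section Aux
variable {k A : Type*} [Field k] [CommRing A] [Algebra k A] (Br : A →ₗ[k] A →ₗ[k] A)

noncomputable def envHom : FreeAlgebra k (A ⊕ A) →ₐ[k] Module.End k A :=
  FreeAlgebra.lift k (Sum.elim (fun a => LinearMap.mulLeft k a) fun a => (Br a : A →ₗ[k] A))

theorem envHom_rel (skew : ∀ a b, Br a b = - Br b a)
    (jacobi : ∀ a b c, Br a (Br b c) = Br (Br a b) c + Br b (Br a c))
    (leibniz : ∀ a b c, Br a (b * c) = Br a b * c + b * Br a c)
    ⦃x y : FreeAlgebra k (A ⊕ A)⦄ (r : PoissonEnvRel k A Br x y) :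
    envHom Br x = envHom Br y := by
  induction r with
  | m_add a b => ext c; simp [envHom, add_mul]
  | m_smul c a => ext d; simp [envHom, smul_mul_assoc]
  | h_add a b => ext c; simp [envHom]
  | h_smul c a => ext d; simp [envHom]
  | m_mul a b => ext c; simp [envHom, Module.End.mul_apply, mul_assoc]
  | m_one => ext c; simp [envHom]
  | h_br a b =>
      ext c
      simp only [envHom, map_mul, map_sub, map_add, FreeAlgebra.lift_ι_apply, Sum.elim_inr, LinearMap.sub_apply,
        Module.End.mul_apply]
      rw [jacobi a b c]; ring
  | h_mul a b =>
      ext c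
      simp only [envHom, map_mul, map_sub, map_add, FreeAlgebra.lift_ι_apply, Sum.elim_inr, Sum.elim_inl,
        LinearMap.add_apply, Module.End.mul_apply, LinearMap.mulLeft_apply]
      rw [skew (a * b) c, leibniz c a b, skew a c, skew b c]; ring
  | m_br a b =>
      ext c
      simp only [envHom, map_mul, map_sub, map_add, FreeAlgebra.lift_ι_apply, Sum.elim_inr, Sum.elim_inl,
        LinearMap.sub_apply, Module.End.mul_apply, LinearMap.mulLeft_apply]
      rw [leibniz a b c]; ring

end Aux

/-- For a Poisson algebra `A`, `A^e ≅ A ⊕ I` as left `A`-modules, where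
`I` is the left ideal of `A^e` generated by the `h_x`; equivalently, the unique
`A^e`-module map `ξ : A^e → A` with `ξ(1) = 1` splits `m : A → A^e` and has kernel `I`. -/
theorem poisson_env_splits (k A : Type*) [Field k] [CommRing A] [Algebra k A]
    (Br : A →ₗ[k] A →ₗ[k] A)
    (skew : ∀ a b, Br a b = - Br b a)
    (jacobi : ∀ a b c, Br a (Br b c) = Br (Br a b) c + Br b (Br a c))
    (leibniz : ∀ a b c, Br a (b * c) = Br a b * c + b * Br a c)
    -- the structure maps of `A^e`
    (m h : A → RingQuot (PoissonEnvRel k A Br))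
    (hm : ∀ a, m a = RingQuot.mkAlgHom k (PoissonEnvRel k A Br) (FreeAlgebra.ι k (Sum.inl a)))
    (hh : ∀ a, h a = RingQuot.mkAlgHom k (PoissonEnvRel k A Br) (FreeAlgebra.ι k (Sum.inr a))) :
    ∃ ξ : RingQuot (PoissonEnvRel k A Br) →ₗ[k] A,
      -- `ξ` is the `A^e`-module map sending `1` to `1` (for the Poisson module structure
      -- of `A` over itself: `m_x · a = xa`, `h_x · a = {x,a}`)
      (ξ 1 = 1 ∧ (∀ (x : A) (w), ξ (m x * w) = x * ξ w) ∧
        (∀ (x : A) (w), ξ (h x * w) = Br x (ξ w))) ∧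
      -- uniqueness of such a map
      (∀ ξ' : RingQuot (PoissonEnvRel k A Br) →ₗ[k] A,
        (ξ' 1 = 1 ∧ (∀ (x : A) (w), ξ' (m x * w) = x * ξ' w) ∧
          (∀ (x : A) (w), ξ' (h x * w) = Br x (ξ' w))) → ξ' = ξ) ∧
      -- `ξ` splits `m` as a left `A`-module map
      (∀ a : A, ξ (m a) = a) ∧
      -- the kernel of `ξ` is the left ideal generated by the `h_x`, so `A^e ≅ A ⊕ I`
      LinearMap.ker ξ =
        Submodule.restrictScalars k
          (Submodule.span (RingQuot (PoissonEnvRel k A Br)) (Set.range h)) := by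
  classical
  let Φ : RingQuot (PoissonEnvRel k A Br) →ₐ[k] Module.End k A :=
    RingQuot.liftAlgHom k ⟨envHom Br, fun x y r => envHom_rel Br skew jacobi leibniz r⟩
  have hΦmk : ∀ x, Φ (RingQuot.mkAlgHom k (PoissonEnvRel k A Br) x) = envHom Br x :=
    fun x => RingQuot.liftAlgHom_mkAlgHom_apply k (envHom Br) _ x
  have hΦm : ∀ a, Φ (m a) = LinearMap.mulLeft k a := by
    intro a; rw [hm, hΦmk]; simp [envHom]
  have hΦh : ∀ a, Φ (h a) = Br a := by
    intro a; rw [hh, hΦmk]; simp [envHom]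
  let ξ : RingQuot (PoissonEnvRel k A Br) →ₗ[k] A :=
    LinearMap.applyₗ (1 : A) ∘ₗ Φ.toLinearMap
  have hξ : ∀ w, ξ w = Φ w 1 := fun w => rfl
  have hBr1 : ∀ a, Br a (1 : A) = 0 := by
    intro a
    have h1 := leibniz a 1 1
    simp only [mul_one, one_mul] at h1
    exact (left_eq_add.mp h1)
  have ξ1 : ξ 1 = 1 := by rw [hξ]; simp
  have ξmul : ∀ u w, ξ (u * w) = Φ u (ξ w) := by
    intro u w; rw [hξ, hξ, map_mul]; rfl
  have ξm : ∀ x w, ξ (m x * w) = x * ξ w := by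
    intro x w; rw [ξmul, hΦm]; rfl
  have ξh : ∀ x w, ξ (h x * w) = Br x (ξ w) := by
    intro x w; rw [ξmul, hΦh]
  have ξsplit : ∀ a, ξ (m a) = a := by
    intro a; rw [← mul_one (m a), ξm, ξ1, mul_one]
  -- basic facts about `m`
  have hmadd : ∀ a b, m (a + b) = m a + m b := by
    intro a b
    rw [hm, hm, hm, ← map_add]
    exact RingQuot.mkAlgHom_rel k (PoissonEnvRel.m_add a b)
  have hmsmul : ∀ (c : k) (a : A), m (c • a) = c • m a := by
    intro c a
    rw [hm, hm, ← map_smul]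
    exact RingQuot.mkAlgHom_rel k (PoissonEnvRel.m_smul c a)
  have hmmul : ∀ a b, m (a * b) = m a * m b := by
    intro a b
    rw [hm, hm, hm, ← map_mul]
    exact RingQuot.mkAlgHom_rel k (PoissonEnvRel.m_mul a b)
  have hm1 : m 1 = 1 := by
    rw [hm, ← map_one (RingQuot.mkAlgHom k (PoissonEnvRel k A Br))]
    exact RingQuot.mkAlgHom_rel k PoissonEnvRel.m_one
  have hm0 : m 0 = 0 := by
    have := hmsmul 0 0
    simpa using this
  have hmalg : ∀ r : k, m (algebraMap k A r) = algebraMap k (RingQuot (PoissonEnvRel k A Br)) r := by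
    intro r
    rw [Algebra.algebraMap_eq_smul_one r, hmsmul, hm1, ← Algebra.algebraMap_eq_smul_one]
  have hmbr : ∀ a b, m (Br a b) = h a * m b - m b * h a := by
    intro a b
    rw [hm, hm, hh, ← map_mul, ← map_mul, ← map_sub]
    exact RingQuot.mkAlgHom_rel k (PoissonEnvRel.m_br a b)
  -- the key computation for uniqueness
  have key : ∀ (ξ' : RingQuot (PoissonEnvRel k A Br) →ₗ[k] A),
      (∀ x w, ξ' (m x * w) = x * ξ' w) → (∀ x w, ξ' (h x * w) = Br x (ξ' w)) →
      ∀ (x : FreeAlgebra k (A ⊕ A)) (w),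
        ξ' (RingQuot.mkAlgHom k (PoissonEnvRel k A Br) x * w) =
          Φ (RingQuot.mkAlgHom k (PoissonEnvRel k A Br) x) (ξ' w) := by
    intro ξ' pm ph x
    induction x using FreeAlgebra.induction with
    | grade0 r =>
        intro w
        rw [AlgHom.commutes, ← Algebra.smul_def, map_smul, AlgHom.commutes,
          Module.algebraMap_end_apply]
    | grade1 g =>
        intro w
        cases g with
        | inl a => rw [← hm a, pm, hΦm]; rfl
        | inr a => rw [← hh a, ph, hΦh]
    | mul x y ihx ihy =>
        intro w
        rw [map_mul (RingQuot.mkAlgHom k (PoissonEnvRel k A Br)), mul_assoc, ihx, ihy,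
          map_mul Φ, Module.End.mul_apply]
    | add x y ihx ihy =>
        intro w
        rw [map_add (RingQuot.mkAlgHom k (PoissonEnvRel k A Br)), add_mul, map_add ξ',
          ihx, ihy, map_add Φ, LinearMap.add_apply]
  refine ⟨ξ, ⟨ξ1, ξm, ξh⟩, ?_, ξsplit, ?_⟩
  · -- uniqueness
    rintro ξ' ⟨h1, h2, h3⟩
    ext w
    obtain ⟨x, rfl⟩ := RingQuot.mkAlgHom_surjective k (PoissonEnvRel k A Br) w
    have hk := key ξ' h2 h3 x 1
    rw [mul_one] at hk
    rw [hk, h1, hξ]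
  · -- kernel
    set I := Submodule.span (RingQuot (PoissonEnvRel k A Br)) (Set.range h) with hI
    have hIker : ∀ v ∈ I, ξ v = 0 := by
      intro v hv
      refine Submodule.span_induction ?_ ?_ ?_ ?_ hv
      · rintro _ ⟨a, rfl⟩
        rw [← mul_one (h a), ξh, ξ1, hBr1]
      · exact map_zero ξ
      · intro u v _ _ hu hv
        rw [map_add, hu, hv, add_zero]
      · intro r u _ hu
        rw [smul_eq_mul, ξmul, hu, map_zero]
    have base1 : (1 : RingQuot (PoissonEnvRel k A Br)) - m (ξ 1) ∈ I := by
      rw [ξ1, hm1, sub_self]; exact zero_mem I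
    have stepm : ∀ (a : A) (w), w - m (ξ w) ∈ I → m a * w - m (ξ (m a * w)) ∈ I := by
      intro a w hw
      rw [ξm, hmmul, ← mul_sub]
      simpa using I.smul_mem (m a) hw
    have steph : ∀ (a : A) (w), w - m (ξ w) ∈ I → h a * w - m (ξ (h a * w)) ∈ I := by
      intro a w hw
      rw [ξh, hmbr]
      have heq : h a * w - (h a * m (ξ w) - m (ξ w) * h a) =
          h a * (w - m (ξ w)) + m (ξ w) * h a := by rw [mul_sub]; abel
      rw [heq]
      refine I.add_mem ?_ ?_
      · simpa using I.smul_mem (h a) hw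
      · simpa using I.smul_mem (m (ξ w)) (Submodule.subset_span ⟨a, rfl⟩)
    have main : ∀ (x : FreeAlgebra k (A ⊕ A)) (w), w - m (ξ w) ∈ I →
        RingQuot.mkAlgHom k (PoissonEnvRel k A Br) x * w -
          m (ξ (RingQuot.mkAlgHom k (PoissonEnvRel k A Br) x * w)) ∈ I := by
      intro x
      induction x using FreeAlgebra.induction with
      | grade0 r =>
          intro w hw
          rw [AlgHom.commutes, ← hmalg r]
          exact stepm _ w hw
      | grade1 g =>
          intro w hw
          cases g with
          | inl a => rw [← hm a]; exact stepm a w hw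
          | inr a => rw [← hh a]; exact steph a w hw
      | mul x y ihx ihy =>
          intro w hw
          rw [map_mul, mul_assoc]
          exact ihx _ (ihy _ hw)
      | add x y ihx ihy =>
          intro w hw
          have hx := ihx w hw
          have hy := ihy w hw
          rw [map_add, add_mul]
          have heq : RingQuot.mkAlgHom k (PoissonEnvRel k A Br) x * w +
              RingQuot.mkAlgHom k (PoissonEnvRel k A Br) y * w -
              m (ξ (RingQuot.mkAlgHom k (PoissonEnvRel k A Br) x * w +
                RingQuot.mkAlgHom k (PoissonEnvRel k A Br) y * w)) =
              (RingQuot.mkAlgHom k (PoissonEnvRel k A Br) x * w -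
                m (ξ (RingQuot.mkAlgHom k (PoissonEnvRel k A Br) x * w))) +
              (RingQuot.mkAlgHom k (PoissonEnvRel k A Br) y * w -
                m (ξ (RingQuot.mkAlgHom k (PoissonEnvRel k A Br) y * w))) := by
            rw [map_add, hmadd]; abel
          rw [heq]
          exact I.add_mem hx hy
    ext w
    simp only [LinearMap.mem_ker, Submodule.restrictScalars_mem]
    constructor
    · intro hw
      obtain ⟨x, rfl⟩ := RingQuot.mkAlgHom_surjective k (PoissonEnvRel k A Br) w
      have := main x 1 base1
      rw [mul_one, hw, hm0, sub_zero] at this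
      exact this
    · exact hIker w
end

section
/- Let B be a Poisson Hopf algebra. Then B (identified with its image under m) is a normal Hopf subalgebra of B^e: for all x, y ∈ B, (ad_ℓ h_y)(x) = {y₁, x}S(y₂) ∈ B and (ad_r h_y)(x) = {S(y₁), x}y₂ ∈ B. -/
open TensorProduct Coalgebra LinearMap

/-- For a Poisson Hopf algebra `B`, `B` is a normal Hopf subalgebra of the
Hopf algebra `B^e`: the adjoint actions of the generators `h_y` on `m_x` satisfy
`(ad_ℓ h_y)(x) = {y₁,x}S(y₂) ∈ B` and `(ad_r h_y)(x) = {S(y₁),x}y₂ ∈ B`. -/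
theorem poisson_env_normal_subalgebra
    (k B E : Type*) [Field k] [CommRing B] [HopfAlgebra k B]
    [Ring E] [HopfAlgebra k E]
    -- the Poisson structure on `B`
    (Br : B →ₗ[k] B →ₗ[k] B)
    (skew : ∀ a b, Br a b = - Br b a)
    (jacobi : ∀ a b c, Br a (Br b c) = Br (Br a b) c + Br b (Br a c))
    (leibniz : ∀ a b c, Br a (b * c) = Br a b * c + b * Br a c)
    (BrT : (B ⊗[k] B) →ₗ[k] (B ⊗[k] B) →ₗ[k] (B ⊗[k] B))
    (hBrT : ∀ a b c d : B,
      BrT (a ⊗ₜ[k] b) (c ⊗ₜ[k] d) = (a * c) ⊗ₜ[k] (Br b d) + (Br a c) ⊗ₜ[k] (d * b))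
    (compat : ∀ a b : B, comul (R := k) (Br a b) = BrT (comul a) (comul b))
    -- `E = B^e` with its structure maps `m` (an injective algebra map) and `h` (a Lie map)
    (m : B →ₐ[k] E) (hminj : Function.Injective m) (h : B →ₗ[k] E)
    (rel_hbr : ∀ x y, h (Br x y) = h x * h y - h y * h x)
    (rel_hmul : ∀ x y, h (x * y) = m y * h x + m x * h y)
    (rel_mbr : ∀ x y, m (Br x y) = h x * m y - m y * h x)
    (hgen : Algebra.adjoin k (Set.range m ∪ Set.range h) = ⊤)
    -- the Hopf algebra structure of `B^e` (Theorem `Hopfstr`)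
    (hcomul_m : ∀ x : B, comul (R := k) (m x) =
      TensorProduct.map m.toLinearMap m.toLinearMap (comul x))
    (hcounit_m : ∀ x : B, counit (R := k) (m x) = counit (R := k) x)
    (hcomul_h : ∀ y : B, comul (R := k) (h y) =
      (TensorProduct.map m.toLinearMap h + TensorProduct.map h m.toLinearMap) (comul y))
    (hcounit_h : ∀ y : B, counit (R := k) (h y) = 0)
    (hantipode_m : ∀ x : B, HopfAlgebra.antipode (R := k) (m x) =
      m (HopfAlgebra.antipode (R := k) x))
    (hantipode_h : ∀ y : B, HopfAlgebra.antipode (R := k) (h y) =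
      h (HopfAlgebra.antipode (R := k) y)) :
    ∀ x y : B,
      -- `(ad_ℓ h_y)(m_x) = m({y₁,x}S(y₂))`
      mul' k E (TensorProduct.map (mulRight k (m x)) (HopfAlgebra.antipode (R := k))
          (comul (R := k) (h y))) =
        m (mul' k B (TensorProduct.map (Br.flip x) (HopfAlgebra.antipode (R := k))
          (comul (R := k) y))) ∧
      -- `(ad_r h_y)(m_x) = m({S(y₁),x}y₂)`
      mul' k E (TensorProduct.map (mulRight k (m x) ∘ₗ HopfAlgebra.antipode (R := k))
          LinearMap.id (comul (R := k) (h y))) =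
        m (mul' k B (TensorProduct.map (Br.flip x ∘ₗ HopfAlgebra.antipode (R := k))
          LinearMap.id (comul (R := k) y))) := by
  intro x y
  have hmm : ∀ a : B, m a * m x = m x * m a := by
    intro a; rw [← map_mul, ← map_mul, mul_comm]
  have hz1 : mul' k E ((HopfAlgebra.antipode (R := k)).lTensor E (comul (R := k) (h y))) = 0 := by
    rw [HopfAlgebra.mul_antipode_lTensor_comul_apply, hcounit_h, map_zero]
  have hz2 : mul' k E ((HopfAlgebra.antipode (R := k)).rTensor E (comul (R := k) (h y))) = 0 := by
    rw [HopfAlgebra.mul_antipode_rTensor_comul_apply, hcounit_h, map_zero]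
  constructor
  · have key : ∀ t : B ⊗[k] B,
        mul' k E (TensorProduct.map (mulRight k (m x)) (HopfAlgebra.antipode (R := k))
          ((TensorProduct.map m.toLinearMap h + TensorProduct.map h m.toLinearMap) t)) =
        m (mul' k B (TensorProduct.map (Br.flip x) (HopfAlgebra.antipode (R := k)) t)) +
        m x * mul' k E ((HopfAlgebra.antipode (R := k)).lTensor E
          ((TensorProduct.map m.toLinearMap h + TensorProduct.map h m.toLinearMap) t)) := by
      intro t
      induction t using TensorProduct.induction_on with
      | zero => simp
      | tmul a b =>
          simp only [LinearMap.add_apply, TensorProduct.map_tmul, map_add,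
            LinearMap.mul'_apply, LinearMap.lTensor_tmul, LinearMap.flip_apply,
            mulRight_apply, hantipode_m, hantipode_h, AlgHom.toLinearMap_apply]
          rw [map_mul, rel_mbr, hmm a]
          noncomm_ring
      | add u v hu hv =>
          simp only [map_add, LinearMap.add_apply] at *
          rw [hu, hv]
          simp only [mul_add]
          abel
    rw [hcomul_h y, key, ← hcomul_h y, hz1, mul_zero, add_zero]
  · have key : ∀ t : B ⊗[k] B,
        mul' k E (TensorProduct.map (mulRight k (m x) ∘ₗ HopfAlgebra.antipode (R := k))
          LinearMap.id
          ((TensorProduct.map m.toLinearMap h + TensorProduct.map h m.toLinearMap) t)) =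
        m (mul' k B (TensorProduct.map (Br.flip x ∘ₗ HopfAlgebra.antipode (R := k))
          LinearMap.id t)) +
        m x * mul' k E ((HopfAlgebra.antipode (R := k)).rTensor E
          ((TensorProduct.map m.toLinearMap h + TensorProduct.map h m.toLinearMap) t)) := by
      intro t
      induction t using TensorProduct.induction_on with
      | zero => simp
      | tmul a b =>
          simp only [LinearMap.add_apply, TensorProduct.map_tmul, map_add,
            LinearMap.mul'_apply, LinearMap.rTensor_tmul, LinearMap.flip_apply,
            mulRight_apply, hantipode_m, hantipode_h, AlgHom.toLinearMap_apply,
            LinearMap.id_apply, LinearMap.comp_apply]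
          rw [map_mul, rel_mbr, hmm (HopfAlgebra.antipode (R := k) a)]
          noncomm_ring
      | add u v hu hv =>
          simp only [map_add, LinearMap.add_apply] at *
          rw [hu, hv]
          simp only [mul_add]
          abel
    rw [hcomul_h y, key, ← hcomul_h y, hz2, mul_zero, add_zero]
end

section
/- Let B be a Poisson Hopf algebra, π: B^e → H(B) := B^e/B^e B⁺ the projection, and θ = π ∘ h. Then every θ(b) (b ∈ B) is a primitive element of H(B): Δ(θ(b)) = 1⊗θ(b) + θ(b)⊗1. Consequently H(B) is generated by primitive elements as an algebra and is a connected Hopf algebra. -/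
open TensorProduct Coalgebra

/-- For a Poisson Hopf algebra `B`, with `π : B^e → H(B) = B^e/B^eB⁺` the
projection and `θ = π ∘ h`, every `θ(b)` is a primitive element of `H(B)`; consequently
`H(B)` is generated by primitive elements as an algebra. -/
theorem theta_primitive
    (k B E Q : Type*) [Field k] [CommRing B] [HopfAlgebra k B]
    [Ring E] [HopfAlgebra k E] [Ring Q] [Bialgebra k Q]
    -- the Poisson structure on `B`
    (Br : B →ₗ[k] B →ₗ[k] B)
    (skew : ∀ a b, Br a b = - Br b a)
    (jacobi : ∀ a b c, Br a (Br b c) = Br (Br a b) c + Br b (Br a c))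
    (leibniz : ∀ a b c, Br a (b * c) = Br a b * c + b * Br a c)
    (BrT : (B ⊗[k] B) →ₗ[k] (B ⊗[k] B) →ₗ[k] (B ⊗[k] B))
    (hBrT : ∀ a b c d : B,
      BrT (a ⊗ₜ[k] b) (c ⊗ₜ[k] d) = (a * c) ⊗ₜ[k] (Br b d) + (Br a c) ⊗ₜ[k] (d * b))
    (compat : ∀ a b : B, comul (R := k) (Br a b) = BrT (comul a) (comul b))
    -- `E = B^e` with its structure maps `m` and `h`
    (m : B →ₐ[k] E) (hminj : Function.Injective m) (h : B →ₗ[k] E)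
    (rel_hbr : ∀ x y, h (Br x y) = h x * h y - h y * h x)
    (rel_hmul : ∀ x y, h (x * y) = m y * h x + m x * h y)
    (rel_mbr : ∀ x y, m (Br x y) = h x * m y - m y * h x)
    (hgen : Algebra.adjoin k (Set.range m ∪ Set.range h) = ⊤)
    -- the Hopf algebra structure of `B^e`
    (hcomul_m : ∀ x : B, comul (R := k) (m x) =
      TensorProduct.map m.toLinearMap m.toLinearMap (comul x))
    (hcounit_m : ∀ x : B, counit (R := k) (m x) = counit (R := k) x)
    (hcomul_h : ∀ y : B, comul (R := k) (h y) =
      (TensorProduct.map m.toLinearMap h + TensorProduct.map h m.toLinearMap) (comul y))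
    (hcounit_h : ∀ y : B, counit (R := k) (h y) = 0)
    (hantipode_m : ∀ x : B, HopfAlgebra.antipode (R := k) (m x) =
      m (HopfAlgebra.antipode (R := k) x))
    (hantipode_h : ∀ y : B, HopfAlgebra.antipode (R := k) (h y) =
      h (HopfAlgebra.antipode (R := k) y))
    -- `Q = H(B) = B^e / B^e B⁺` with projection `π`, a surjective bialgebra map with
    -- kernel `B^e B⁺`
    (π : E →ₐ[k] Q) (hπsurj : Function.Surjective π)
    (hπcomul : ∀ z : E, comul (R := k) (π z) =
      TensorProduct.map π.toLinearMap π.toLinearMap (comul z))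
    (hπcounit : ∀ z : E, counit (R := k) (π z) = counit (R := k) z)
    (hπker : LinearMap.ker π.toLinearMap =
      Submodule.span k {u : E | ∃ (z : E) (b : B), counit (R := k) b = 0 ∧ u = z * m b}) :
    -- every `θ(b) = π(h b)` is primitive, and `H(B)` is generated by primitives
    (∀ b : B, comul (R := k) (π (h b)) = 1 ⊗ₜ[k] π (h b) + π (h b) ⊗ₜ[k] 1) ∧
    Algebra.adjoin k {q : Q | comul (R := k) q = 1 ⊗ₜ[k] q + q ⊗ₜ[k] 1} = ⊤ := by
  -- `π ∘ m` sends `x` to `ε(x) • 1`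
  have hπm : ∀ x : B, π (m x) = counit (R := k) x • 1 := by
    intro x
    have h0 : counit (R := k) (x - counit (R := k) x • (1 : B)) = 0 := by
      simp [map_sub, Bialgebra.counit_one]
    have hker : m (x - counit (R := k) x • (1 : B)) ∈ LinearMap.ker π.toLinearMap := by
      rw [hπker]
      exact Submodule.subset_span ⟨1, _, h0, by rw [one_mul]⟩
    have : π (m (x - counit (R := k) x • (1 : B))) = 0 := hker
    rw [map_sub, map_smul, map_one, map_sub, map_smul, map_one, sub_eq_zero] at this
    exact this
  -- the scalar map `x ↦ ε(x) • 1 : B →ₗ Q`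
  set εs : B →ₗ[k] Q := (Algebra.linearMap k Q) ∘ₗ (counit (R := k) (A := B)) with hεs
  have hεs_eq : (π.toLinearMap ∘ₗ m.toLinearMap) = εs := by
    ext x
    simp [εs, hπm x, Algebra.algebraMap_eq_smul_one]
  set θ : B →ₗ[k] Q := π.toLinearMap ∘ₗ h with hθ
  have hprim : ∀ b : B, comul (R := k) (π (h b)) = 1 ⊗ₜ[k] π (h b) + π (h b) ⊗ₜ[k] 1 := by
    intro b
    have key : comul (R := k) (π (h b)) =
        (TensorProduct.map εs θ + TensorProduct.map θ εs) (comul (R := k) b) := by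
      rw [hπcomul, hcomul_h, LinearMap.add_apply, map_add]
      have h1 : TensorProduct.map π.toLinearMap π.toLinearMap ∘ₗ
          TensorProduct.map m.toLinearMap h = TensorProduct.map εs θ := by
        rw [← TensorProduct.map_comp, hεs_eq, hθ]
      have h2 : TensorProduct.map π.toLinearMap π.toLinearMap ∘ₗ
          TensorProduct.map h m.toLinearMap = TensorProduct.map θ εs := by
        rw [← TensorProduct.map_comp, hεs_eq, hθ]
      have h1' := LinearMap.congr_fun h1 (comul (R := k) b)
      have h2' := LinearMap.congr_fun h2 (comul (R := k) b)
      simp only [LinearMap.comp_apply] at h1' h2'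
      rw [h1', h2', LinearMap.add_apply]
    -- first summand: `(εs ⊗ θ)(comul b) = 1 ⊗ θ b`
    have e1 : TensorProduct.map εs θ = (TensorProduct.mk k Q Q 1) ∘ₗ θ ∘ₗ
        ((TensorProduct.lid k B).toLinearMap ∘ₗ
          LinearMap.rTensor B (counit (R := k) (A := B))) := by
      apply TensorProduct.ext'
      intro x y
      simp only [TensorProduct.map_tmul, LinearMap.comp_apply, LinearMap.rTensor_tmul,
        LinearEquiv.coe_coe, TensorProduct.lid_tmul, TensorProduct.mk_apply, map_smul, εs,
        Algebra.linearMap_apply, Algebra.algebraMap_eq_smul_one]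
      rw [TensorProduct.smul_tmul, TensorProduct.tmul_smul]
    have e2 : TensorProduct.map θ εs = ((TensorProduct.mk k Q Q).flip 1) ∘ₗ θ ∘ₗ
        ((TensorProduct.rid k B).toLinearMap ∘ₗ
          LinearMap.lTensor B (counit (R := k) (A := B))) := by
      apply TensorProduct.ext'
      intro x y
      simp only [TensorProduct.map_tmul, LinearMap.comp_apply, LinearMap.lTensor_tmul,
        LinearEquiv.coe_coe, TensorProduct.rid_tmul, LinearMap.flip_apply,
        TensorProduct.mk_apply, map_smul, εs,
        Algebra.linearMap_apply, Algebra.algebraMap_eq_smul_one]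
      rw [← TensorProduct.smul_tmul, TensorProduct.smul_tmul']
    have c1 : ((TensorProduct.lid k B).toLinearMap ∘ₗ
        LinearMap.rTensor B (counit (R := k) (A := B))) (comul (R := k) b) = b := by
      have := LinearMap.congr_fun (Coalgebra.rTensor_counit_comp_comul (R := k) (A := B)) b
      simp only [LinearMap.comp_apply] at this ⊢
      rw [this]; simp
    have c2 : ((TensorProduct.rid k B).toLinearMap ∘ₗ
        LinearMap.lTensor B (counit (R := k) (A := B))) (comul (R := k) b) = b := by
      have := LinearMap.congr_fun (Coalgebra.lTensor_counit_comp_comul (R := k) (A := B)) b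
      simp only [LinearMap.comp_apply] at this ⊢
      rw [this]; simp
    rw [key, LinearMap.add_apply, e1, e2]
    simp only [LinearMap.comp_apply, c1, c2]
    rfl
  refine ⟨hprim, ?_⟩
  rw [eq_top_iff]
  rintro q -
  obtain ⟨z, rfl⟩ := hπsurj q
  have hz : z ∈ Algebra.adjoin k (Set.range m ∪ Set.range h) := hgen ▸ Algebra.mem_top
  have : π z ∈ (Algebra.adjoin k (Set.range m ∪ Set.range h)).map π :=
    Subalgebra.mem_map.2 ⟨z, hz, rfl⟩
  rw [AlgHom.map_adjoin] at this
  refine Algebra.adjoin_le ?_ this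
  rintro q ⟨u, hu, rfl⟩
  rcases hu with ⟨x, rfl⟩ | ⟨y, rfl⟩
  · rw [hπm]
    exact Subalgebra.smul_mem _ (Subalgebra.one_mem _) _
  · exact Algebra.subset_adjoin (hprim y)
end

section
/- Let B be a Poisson bialgebra and M, N left Poisson modules over B. Then M ⊗ N is a left Poisson module over B via a·(m⊗n) = a₁m ⊗ a₂n and {a, m⊗n} = a₁m ⊗ {a₂, n} + {a₁, m} ⊗ a₂n. -/
open TensorProduct Coalgebra

/-- If `B` is a Poisson bialgebra and `M`, `N` are left Poisson modules
over `B`, then `M ⊗ N` is a left Poisson module via `a·(m⊗n) = a₁m ⊗ a₂n` and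
`{a, m⊗n} = a₁m ⊗ {a₂,n} + {a₁,m} ⊗ a₂n`. -/
theorem tensor_poisson_module
    (k B M N : Type*) [Field k] [CommRing B] [Bialgebra k B]
    [AddCommGroup M] [Module k M] [AddCommGroup N] [Module k N]
    -- the Poisson bialgebra structure on `B`
    (Br : B →ₗ[k] B →ₗ[k] B)
    (skew : ∀ a b, Br a b = - Br b a)
    (jacobi : ∀ a b c, Br a (Br b c) = Br (Br a b) c + Br b (Br a c))
    (leibniz : ∀ a b c, Br a (b * c) = Br a b * c + b * Br a c)
    (BrT : (B ⊗[k] B) →ₗ[k] (B ⊗[k] B) →ₗ[k] (B ⊗[k] B))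
    (hBrT : ∀ a b c d : B,
      BrT (a ⊗ₜ[k] b) (c ⊗ₜ[k] d) = (a * c) ⊗ₜ[k] (Br b d) + (Br a c) ⊗ₜ[k] (d * b))
    (compat : ∀ a b : B, comul (R := k) (Br a b) = BrT (comul a) (comul b))
    -- `M` is a left Poisson module over `B` (action `ρM`, bracket `brM`)
    (ρM : B →ₗ[k] M →ₗ[k] M)
    (hρMmul : ∀ a b, ρM (a * b) = ρM a ∘ₗ ρM b) (hρMone : ρM 1 = LinearMap.id)
    (brM : B →ₗ[k] M →ₗ[k] M)
    (hM1 : ∀ a b u, brM (Br a b) u = brM a (brM b u) - brM b (brM a u))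
    (hM2 : ∀ a b u, brM (a * b) u = ρM a (brM b u) + ρM b (brM a u))
    (hM3 : ∀ a b u, brM a (ρM b u) = ρM (Br a b) u + ρM b (brM a u))
    -- `N` is a left Poisson module over `B` (action `ρN`, bracket `brN`)
    (ρN : B →ₗ[k] N →ₗ[k] N)
    (hρNmul : ∀ a b, ρN (a * b) = ρN a ∘ₗ ρN b) (hρNone : ρN 1 = LinearMap.id)
    (brN : B →ₗ[k] N →ₗ[k] N)
    (hN1 : ∀ a b u, brN (Br a b) u = brN a (brN b u) - brN b (brN a u))
    (hN2 : ∀ a b u, brN (a * b) u = ρN a (brN b u) + ρN b (brN a u))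
    (hN3 : ∀ a b u, brN a (ρN b u) = ρN (Br a b) u + ρN b (brN a u))
    -- the action `a·(m⊗n) = a₁m ⊗ a₂n` and bracket
    -- `{a, m⊗n} = a₁m ⊗ {a₂,n} + {a₁,m} ⊗ a₂n` on `M ⊗ N`
    (ρT : B →ₗ[k] (M ⊗[k] N) →ₗ[k] (M ⊗[k] N))
    (hρT : ∀ a : B, ρT a = TensorProduct.homTensorHomMap (RingHom.id k) M N M N
      (TensorProduct.map ρM ρN (comul (R := k) a)))
    (brT : B →ₗ[k] (M ⊗[k] N) →ₗ[k] (M ⊗[k] N))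
    (hbrT : ∀ a : B, brT a = TensorProduct.homTensorHomMap (RingHom.id k) M N M N
      ((TensorProduct.map ρM brN + TensorProduct.map brM ρN) (comul (R := k) a))) :
    -- `M ⊗ N` is a left Poisson module over `B`
    ((∀ a b, ρT (a * b) = ρT a ∘ₗ ρT b) ∧ ρT 1 = LinearMap.id) ∧
    (∀ a b u, brT (Br a b) u = brT a (brT b u) - brT b (brT a u)) ∧
    (∀ a b u, brT (a * b) u = ρT a (brT b u) + ρT b (brT a u)) ∧
    (∀ a b u, brT a (ρT b u) = ρT (Br a b) u + ρT b (brT a u)) := by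
  classical
  set F : (B ⊗[k] B) →ₗ[k] (M ⊗[k] N) →ₗ[k] M ⊗[k] N :=
    (TensorProduct.homTensorHomMap (RingHom.id k) M N M N) ∘ₗ TensorProduct.map ρM ρN with hF
  set G : (B ⊗[k] B) →ₗ[k] (M ⊗[k] N) →ₗ[k] M ⊗[k] N :=
    (TensorProduct.homTensorHomMap (RingHom.id k) M N M N) ∘ₗ
      (TensorProduct.map ρM brN + TensorProduct.map brM ρN) with hG
  have hρT' : ∀ a : B, ρT a = F (comul (R := k) a) := fun a => by rw [hρT a]; rfl
  have hbrT' : ∀ a : B, brT a = G (comul (R := k) a) := fun a => by rw [hbrT a]; rfl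
  have Fp : ∀ (x y : B) (m : M) (n : N),
      F (x ⊗ₜ[k] y) (m ⊗ₜ[k] n) = ρM x m ⊗ₜ[k] ρN y n := by
    intro x y m n
    simp [hF, TensorProduct.homTensorHomMap_apply]
  have Gp : ∀ (x y : B) (m : M) (n : N),
      G (x ⊗ₜ[k] y) (m ⊗ₜ[k] n) = ρM x m ⊗ₜ[k] brN y n + brM x m ⊗ₜ[k] ρN y n := by
    intro x y m n
    simp [hG, TensorProduct.homTensorHomMap_apply]
  have hρMmul' : ∀ (x y : B) (m : M), ρM (x * y) m = ρM x (ρM y m) := fun x y m => by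
    rw [hρMmul]; rfl
  have hρNmul' : ∀ (x y : B) (n : N), ρN (x * y) n = ρN x (ρN y n) := fun x y n => by
    rw [hρNmul]; rfl
  have hρMswap : ∀ (x y : B) (m : M), ρM x (ρM y m) = ρM y (ρM x m) := fun x y m => by
    rw [← hρMmul', mul_comm, hρMmul']
  have hρNswap : ∀ (x y : B) (n : N), ρN x (ρN y n) = ρN y (ρN x n) := fun x y n => by
    rw [← hρNmul', mul_comm, hρNmul']
  -- key lemma 1: F is multiplicative
  have key1 : ∀ s t : B ⊗[k] B, F (s * t) = F s ∘ₗ F t := by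
    intro s t
    induction s using TensorProduct.induction_on with
    | zero => simp
    | add u v hu hv => simp [add_mul, map_add, LinearMap.add_comp, hu, hv]
    | tmul a b =>
      induction t using TensorProduct.induction_on with
      | zero => simp
      | add u v hu hv => simp [mul_add, map_add, LinearMap.comp_add, hu, hv]
      | tmul c d =>
        apply TensorProduct.ext'
        intro m n
        simp [Algebra.TensorProduct.tmul_mul_tmul, Fp, hρMmul', hρNmul']
  -- key lemma 2: G and BrT
  have key2 : ∀ s t : B ⊗[k] B, G (BrT s t) = G s ∘ₗ G t - G t ∘ₗ G s := by
    intro s t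
    induction s using TensorProduct.induction_on with
    | zero => simp
    | add u v hu hv =>
      simp only [map_add, LinearMap.add_apply, hu, hv, LinearMap.add_comp,
        LinearMap.comp_add]
      abel
    | tmul a b =>
      induction t using TensorProduct.induction_on with
      | zero => simp
      | add u v hu hv =>
        simp only [map_add, LinearMap.add_apply, hu, hv, LinearMap.add_comp,
          LinearMap.comp_add]
        abel
      | tmul c d =>
        apply TensorProduct.ext'
        intro m n
        rw [hBrT]
        simp only [map_add, LinearMap.add_apply, LinearMap.sub_apply,
          LinearMap.comp_apply, Gp, map_add]
        simp only [hρMmul', hρNmul', hM1, hM2, hM3, hN1, hN2, hN3,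
          TensorProduct.tmul_add, TensorProduct.tmul_sub, TensorProduct.add_tmul,
          TensorProduct.sub_tmul]
        try simp only [skew c a, skew d b, map_neg, LinearMap.neg_apply,
          TensorProduct.neg_tmul, TensorProduct.tmul_neg]
        try simp only [hρMswap c a, hρNswap d b]
        abel
  -- key lemma 3: G of a product
  have key3 : ∀ s t : B ⊗[k] B, G (s * t) = F s ∘ₗ G t + F t ∘ₗ G s := by
    intro s t
    induction s using TensorProduct.induction_on with
    | zero => simp
    | add u v hu hv =>
      simp only [add_mul, map_add, hu, hv, LinearMap.add_comp, LinearMap.comp_add]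
      abel
    | tmul a b =>
      induction t using TensorProduct.induction_on with
      | zero => simp
      | add u v hu hv =>
        simp only [mul_add, map_add, hu, hv, LinearMap.add_comp, LinearMap.comp_add]
        abel
      | tmul c d =>
        apply TensorProduct.ext'
        intro m n
        simp only [Algebra.TensorProduct.tmul_mul_tmul, LinearMap.add_apply,
          LinearMap.comp_apply, Gp, Fp, map_add]
        simp only [hρMmul', hρNmul', hM1, hM2, hM3, hN1, hN2, hN3,
          TensorProduct.tmul_add, TensorProduct.tmul_sub, TensorProduct.add_tmul,
          TensorProduct.sub_tmul]
        try simp only [skew c a, skew d b, map_neg, LinearMap.neg_apply,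
          TensorProduct.neg_tmul, TensorProduct.tmul_neg]
        try simp only [hρMswap c a, hρNswap d b]
        abel
  -- key lemma 4: G against F
  have key4 : ∀ s t : B ⊗[k] B, G s ∘ₗ F t = F (BrT s t) + F t ∘ₗ G s := by
    intro s t
    induction s using TensorProduct.induction_on with
    | zero => simp
    | add u v hu hv =>
      simp only [map_add, LinearMap.add_apply, hu, hv, LinearMap.add_comp,
        LinearMap.comp_add]
      abel
    | tmul a b =>
      induction t using TensorProduct.induction_on with
      | zero => simp
      | add u v hu hv =>
        simp only [map_add, LinearMap.add_apply, hu, hv, LinearMap.add_comp,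
          LinearMap.comp_add]
        abel
      | tmul c d =>
        apply TensorProduct.ext'
        intro m n
        rw [hBrT]
        simp only [map_add, LinearMap.add_apply, LinearMap.comp_apply, Gp, Fp,
          map_add]
        simp only [hρMmul', hρNmul', hM1, hM2, hM3, hN1, hN2, hN3,
          TensorProduct.tmul_add, TensorProduct.tmul_sub, TensorProduct.add_tmul,
          TensorProduct.sub_tmul]
        try simp only [skew c a, skew d b, map_neg, LinearMap.neg_apply,
          TensorProduct.neg_tmul, TensorProduct.tmul_neg]
        try simp only [hρMswap c a, hρNswap d b]
        abel
  refine ⟨⟨fun a b => ?_, ?_⟩, fun a b u => ?_, fun a b u => ?_, fun a b u => ?_⟩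
  · simp only [hρT', Bialgebra.comul_mul, key1]
  · rw [hρT', Bialgebra.comul_one]
    apply TensorProduct.ext'
    intro m n
    rw [Algebra.TensorProduct.one_def, Fp, hρMone, hρNone]
    rfl
  · simp only [hbrT', compat, key2]
    simp [LinearMap.sub_apply, LinearMap.comp_apply]
  · simp only [hbrT', hρT', Bialgebra.comul_mul, key3]
    simp [LinearMap.add_apply, LinearMap.comp_apply]
  · simp only [hρT', hbrT', compat]
    rw [← LinearMap.comp_apply (G (comul (R := k) a)) (F (comul (R := k) b)), key4]
    simp [LinearMap.add_apply, LinearMap.comp_apply]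
end
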